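/- arXiv:1603.03749 — 9 statements merged into one kernel-verified Lean document; each statement's English description precedes it below -/
import Mathlib

section
/- Let M > 0, Λ ∈ ℝ, and suppose r_h > 0 satisfies f(r_h) = 0, f'(r_h) ≠ 0, and that r_h is the only zero of f in an interval (a, b) ⊆ (0, ∞) containing r_h. Then the function g(r) = 1/f(r) − 1/(f'(r_h)(r − r_h)), defined for r ∈ (a, b) \ {r_h}, extends to a smooth function on all of (a, b). -/
/-- Removable singularity at a simple horizon: if `r_h ∈ (a, b) ⊆ (0, ∞)` is the
only zero of `f(r) = 1 - 2M/r - Λr²/3` in `(a, b)` and `f'(r_h) ≠ 0`, then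
`g(r) = 1/f(r) - 1/(f'(r_h)(r - r_h))` extends to a smooth function on `(a, b)`. -/
theorem stmt_7 (M Λ a b rh : ℝ) (hM : 0 < M) (ha : 0 ≤ a) (harh : a < rh)
    (hrhb : rh < b)
    (hroot : 1 - 2 * M / rh - Λ * rh ^ 2 / 3 = 0)
    (hder : deriv (fun r : ℝ => 1 - 2 * M / r - Λ * r ^ 2 / 3) rh ≠ 0)
    (honly : ∀ r ∈ Set.Ioo a b, 1 - 2 * M / r - Λ * r ^ 2 / 3 = 0 → r = rh) :
    ∃ g : ℝ → ℝ, ContDiffOn ℝ (⊤ : ℕ∞) g (Set.Ioo a b) ∧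
      ∀ r ∈ Set.Ioo a b, r ≠ rh →
        g r = (1 - 2 * M / r - Λ * r ^ 2 / 3)⁻¹
          - (deriv (fun r : ℝ => 1 - 2 * M / r - Λ * r ^ 2 / 3) rh * (r - rh))⁻¹ := by
  have hrh0 : (0:ℝ) < rh := lt_of_le_of_lt ha harh
  have hrhne : rh ≠ 0 := ne_of_gt hrh0
  -- compute the derivative
  have hderiv : deriv (fun r : ℝ => 1 - 2 * M / r - Λ * r ^ 2 / 3) rh
      = 2 * M / rh ^ 2 - 2 * Λ * rh / 3 := by
    have hinv : HasDerivAt (fun r : ℝ => r⁻¹) (-(rh ^ 2)⁻¹) rh := hasDerivAt_inv hrhne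
    have h2 : HasDerivAt (fun r : ℝ => 2 * M / r) (2 * M * (-(rh ^ 2)⁻¹)) rh := by
      simpa [div_eq_mul_inv] using hinv.const_mul (2 * M)
    have h3 : HasDerivAt (fun r : ℝ => Λ * r ^ 2 / 3) (Λ * (2 * rh) / 3) rh := by
      have := ((hasDerivAt_pow 2 rh).const_mul Λ).div_const 3
      simpa [mul_comm, mul_assoc, mul_left_comm] using this
    have h1 : HasDerivAt (fun r : ℝ => 1 - 2 * M / r - Λ * r ^ 2 / 3) (0 - 2 * M * -(rh ^ 2)⁻¹ - Λ * (2 * rh) / 3) rh := ((hasDerivAt_const rh (1:ℝ)).sub h2).sub h3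
    rw [h1.deriv]
    field_simp
    ring
  set D := deriv (fun r : ℝ => 1 - 2 * M / r - Λ * r ^ 2 / 3) rh with hD
  have hD0 : D ≠ 0 := hder
  -- 2M in terms of rh
  have h2M : 2 * M = rh - Λ * rh ^ 3 / 3 := by
    field_simp at hroot
    linarith
  have hDrh : rh * D = 1 - Λ * rh ^ 2 := by
    rw [hderiv]
    field_simp
    linear_combination (3 : ℝ) * h2M
  -- the quotient polynomial q
  set q : ℝ → ℝ := fun r => 1 - Λ * (r ^ 2 + r * rh + rh ^ 2) / 3 with hq_def
  -- factorization of f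
  have hfact : ∀ r : ℝ, r ≠ 0 →
      1 - 2 * M / r - Λ * r ^ 2 / 3 = (r - rh) * q r / r := by
    intro r hr
    simp only [hq_def]
    field_simp
    linear_combination (-3 : ℝ) * h2M
  -- q nonzero on Ioo a b
  have hqne : ∀ r ∈ Set.Ioo a b, q r ≠ 0 := by
    intro r hr hq0
    by_cases hr_eq : r = rh
    · have : q rh = rh * D := by
        simp only [hq_def]; rw [hDrh]; ring
      rw [hr_eq, this] at hq0
      exact hD0 (by simpa [hrhne] using mul_eq_zero.mp hq0)
    · have hr0 : r ≠ 0 := ne_of_gt (lt_of_le_of_lt ha hr.1)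
      have : 1 - 2 * M / r - Λ * r ^ 2 / 3 = 0 := by
        rw [hfact r hr0, hq0]; ring
      exact hr_eq (honly r hr this)
  refine ⟨fun r => (D + Λ * (r + 2 * rh) / 3) / (D * (1 - Λ * (r ^ 2 + r * rh + rh ^ 2) / 3)),
    ?_, ?_⟩
  · apply ContDiffOn.div
    · exact ContDiff.contDiffOn (by fun_prop (disch := norm_num))
    · exact ContDiff.contDiffOn (by fun_prop (disch := norm_num))
    · intro r hr
      exact mul_ne_zero hD0 (hqne r hr)
  · intro r hr hrne
    have hr0 : r ≠ 0 := ne_of_gt (lt_of_le_of_lt ha hr.1)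
    have hqr := hqne r hr
    have hsub : r - rh ≠ 0 := sub_ne_zero.mpr hrne
    rw [hfact r hr0]
    have key : r * D - q r = (r - rh) * (D + Λ * (r + 2 * rh) / 3) := by
      simp only [hq_def]
      linear_combination hDrh
    have hrw : ((r - rh) * q r / r)⁻¹ - (D * (r - rh))⁻¹
        = (r * D - q r) / (D * (r - rh) * q r) := by
      field_simp
    rw [hrw, key]
    have hden : D * (r - rh) * q r = (r - rh) * (D * q r) := by ring
    rw [hden, mul_div_mul_left _ _ hsub]
end

section
/- Let M ≠ 0, Λ ∈ ℝ, and let ℓ ≥ 2 be an integer. With μ = (ℓ−1)(ℓ+2), w = (ℓ−1)ℓ(ℓ+1)(ℓ+2)/(12M), f(r) = 1 − 2M/r − Λr²/3, and W(r) = w + 6M f(r)/(r(μr + 6M)), one has, for all r > 0 with μr + 6M ≠ 0: −f(r)·W'(r) + W(r)² − w² = f(r)·(ℓ(ℓ+1)/r² − 6M/r³). -/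
/-! Write `W = w + g` with `g = 6 M f / (r (μ r + 6 M))`. The left side is `-f g' + 2 w g + g²`,
so `w` enters only through `12 M w = μ (μ + 2)` (as `(ℓ-1)ℓ(ℓ+1)(ℓ+2) = μ (μ + 2)`), and also
`ℓ(ℓ+1) = μ + 2`. The identity is therefore one between rational functions of `r` with parameters
`M, Λ, μ`, which holds for every `μ` once the denominators `r` and `μ r + 6 M` are cleared. -/

namespace ReggeWheeler

variable (M Λ μ : ℝ)

noncomputable def lapse (r : ℝ) : ℝ := 1 - 2 * M / r - Λ * r ^ 2 / 3

noncomputable def superpotential (w r : ℝ) : ℝ := w + 6 * M * lapse M Λ r / (r * (μ * r + 6 * M))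

lemma hasDerivAt_lapse {r : ℝ} (hr : r ≠ 0) :
    HasDerivAt (lapse M Λ) (2 * M / r ^ 2 - 2 * Λ * r / 3) r := by
  have hinv : HasDerivAt (fun x : ℝ => 2 * M / x) (2 * M * -(r ^ 2)⁻¹) r := by
    simpa only [div_eq_mul_inv] using (hasDerivAt_inv hr).const_mul (2 * M)
  have hsq : HasDerivAt (fun x : ℝ => Λ * x ^ 2 / 3) (Λ * (2 * r) / 3) r := by
    simpa using ((hasDerivAt_pow 2 r).const_mul Λ).div_const 3
  refine (((hasDerivAt_const r (1 : ℝ)).sub hinv).sub hsq).congr_deriv ?_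
  ring

lemma hasDerivAt_superpotential (w : ℝ) {r : ℝ} (hr : r ≠ 0) (hd : μ * r + 6 * M ≠ 0) :
    HasDerivAt (superpotential M Λ μ w)
      (6 * M * ((2 * M / r ^ 2 - 2 * Λ * r / 3) * (r * (μ * r + 6 * M))
        - lapse M Λ r * (2 * μ * r + 6 * M)) / (r * (μ * r + 6 * M)) ^ 2) r := by
  have hden : HasDerivAt (fun x : ℝ => x * (μ * x + 6 * M)) (2 * μ * r + 6 * M) r := by
    refine ((hasDerivAt_id r).mul
      (((hasDerivAt_id r).const_mul μ).add_const (6 * M))).congr_deriv ?_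
    simp only [id]
    ring
  refine ((((hasDerivAt_lapse M Λ hr).const_mul (6 * M)).div hden
    (mul_ne_zero hr hd)).const_add w).congr_deriv ?_
  ring

theorem riccati_superpotential {w r : ℝ} (hw : 12 * M * w = μ * (μ + 2)) (hr : r ≠ 0)
    (hd : μ * r + 6 * M ≠ 0) :
    -(lapse M Λ r * deriv (superpotential M Λ μ w) r) + superpotential M Λ μ w r ^ 2 - w ^ 2
      = lapse M Λ r * ((μ + 2) / r ^ 2 - 6 * M / r ^ 3) := by
  rw [(hasDerivAt_superpotential M Λ μ w hr hd).deriv]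
  -- the form in which `field_simp` sees the denominator
  have hd' : r * μ + M * 6 ≠ 0 := by rwa [mul_comm r, mul_comm M]
  simp only [superpotential, lapse]
  field_simp
  linear_combination 3 * r ^ 2 * (r * μ + M * 6) * ((r - 2 * M) * 3 - r ^ 3 * Λ) * hw

end ReggeWheeler

theorem stmt_8_general (M Λ : ℝ) (hM : M ≠ 0) (ℓ : ℕ) :
    let μ : ℝ := ((ℓ : ℝ) - 1) * ((ℓ : ℝ) + 2)
    let w : ℝ := ((ℓ : ℝ) - 1) * (ℓ : ℝ) * ((ℓ : ℝ) + 1) * ((ℓ : ℝ) + 2) / (12 * M)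
    let f : ℝ → ℝ := fun r => 1 - 2 * M / r - Λ * r ^ 2 / 3
    let W : ℝ → ℝ := fun r => w + 6 * M * f r / (r * (μ * r + 6 * M))
    ∀ r : ℝ, 0 < r → μ * r + 6 * M ≠ 0 →
      -(f r * deriv W r) + (W r) ^ 2 - w ^ 2
        = f r * ((ℓ : ℝ) * ((ℓ : ℝ) + 1) / r ^ 2 - 6 * M / r ^ 3) := by
  intro μ w f W r hr hd
  have hw : 12 * M * w = μ * (μ + 2) := by
    simp only [w, μ]
    field_simp
    ring
  have hℓ : (ℓ : ℝ) * ((ℓ : ℝ) + 1) = μ + 2 := by ring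
  rw [hℓ]
  exact ReggeWheeler.riccati_superpotential M Λ μ hw hr.ne' hd

/-- Chandrasekhar's Riccati identity for the Regge-Wheeler potential:
`-f W' + W² - w² = f (ℓ(ℓ+1)/r² - 6M/r³)`, i.e. the factorization
`H⁻ + w² = D⁻ D⁺` of the Regge-Wheeler operator, extended to `Λ ≠ 0`. -/
theorem stmt_8 (M Λ : ℝ) (hM : M ≠ 0) (ℓ : ℕ) (hℓ : 2 ≤ ℓ) :
    let μ : ℝ := ((ℓ : ℝ) - 1) * ((ℓ : ℝ) + 2)
    let w : ℝ := ((ℓ : ℝ) - 1) * (ℓ : ℝ) * ((ℓ : ℝ) + 1) * ((ℓ : ℝ) + 2) / (12 * M)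
    let f : ℝ → ℝ := fun r => 1 - 2 * M / r - Λ * r ^ 2 / 3
    let W : ℝ → ℝ := fun r => w + 6 * M * f r / (r * (μ * r + 6 * M))
    ∀ r : ℝ, 0 < r → μ * r + 6 * M ≠ 0 →
      -(f r * deriv W r) + (W r) ^ 2 - w ^ 2
        = f r * ((ℓ : ℝ) * ((ℓ : ℝ) + 1) / r ^ 2 - 6 * M / r ^ 3) :=
  stmt_8_general M Λ hM ℓ
end

section
/- Let M ≠ 0, Λ ∈ ℝ, and let ℓ ≥ 2 be an integer. With μ = (ℓ−1)(ℓ+2), w = (ℓ−1)ℓ(ℓ+1)(ℓ+2)/(12M), f(r) = 1 − 2M/r − Λr²/3, W(r) = w + 6M f(r)/(r(μr + 6M)), and the Zerilli potential V^Z(r) = ((μ²ℓ(ℓ+1) − 24M²Λ)r³ + 6μ²Mr² + 36μM²r + 72M³)/(r³(μr + 6M)²), one has, for all r > 0 with μr + 6M ≠ 0: f(r)·W'(r) + W(r)² − w² = f(r)·V^Z(r). -/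
/-!
Writing `W = w + A` with `A = 6 M f / (r (μ r + 6 M))`, one has `W² - w² = 2 w A + A²`, and
`12 M w = μ (μ + 2)` turns the cross term `2 w A` into `μ (μ + 2) f / (r (μ r + 6 M))`. Every term
on the left then carries the factor `f`, and what remains, `W' + μ (μ + 2) / (r (μ r + 6 M)) +
36 M² f / (r (μ r + 6 M))² = V^Z`, is an identity of rational functions in `r`.
-/

noncomputable section

namespace Zerilli

def lapse (M Λ r : ℝ) : ℝ := 1 - 2 * M / r - Λ * r ^ 2 / 3

def superpotential (M Λ μ w r : ℝ) : ℝ := w + 6 * M * lapse M Λ r / (r * (μ * r + 6 * M))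

/-- The Zerilli potential, with `ℓ (ℓ + 1)` written as `μ + 2`. -/
def potential (M Λ μ r : ℝ) : ℝ :=
  ((μ ^ 2 * (μ + 2) - 24 * M ^ 2 * Λ) * r ^ 3 + 6 * μ ^ 2 * M * r ^ 2 + 36 * μ * M ^ 2 * r
      + 72 * M ^ 3) / (r ^ 3 * (μ * r + 6 * M) ^ 2)

theorem hasDerivAt_lapse (M Λ : ℝ) {r : ℝ} (hr : r ≠ 0) :
    HasDerivAt (lapse M Λ) (2 * M / r ^ 2 - 2 * Λ * r / 3) r := by
  have hinv : HasDerivAt (fun x : ℝ => 2 * M / x) (-(2 * M) / r ^ 2) r := by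
    simpa [div_eq_mul_inv, mul_neg] using (hasDerivAt_inv hr).const_mul (2 * M)
  have hsq : HasDerivAt (fun x : ℝ => Λ * x ^ 2 / 3) (Λ * (2 * r) / 3) r := by
    simpa using ((hasDerivAt_pow 2 r).const_mul Λ).div_const 3
  exact (((hasDerivAt_const r 1).sub hinv).sub hsq).congr_deriv (by ring)

theorem hasDerivAt_superpotential (M Λ μ w : ℝ) {r : ℝ} (hr : r ≠ 0)
    (hd : μ * r + 6 * M ≠ 0) :
    HasDerivAt (superpotential M Λ μ w)
      ((6 * M * (2 * M / r ^ 2 - 2 * Λ * r / 3) * (r * (μ * r + 6 * M))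
        - 6 * M * lapse M Λ r * (2 * μ * r + 6 * M)) / (r * (μ * r + 6 * M)) ^ 2) r := by
  have hden : HasDerivAt (fun x : ℝ => x * (μ * x + 6 * M)) (2 * μ * r + 6 * M) r :=
    ((hasDerivAt_id r).mul (((hasDerivAt_id r).const_mul μ).add_const (6 * M))).congr_deriv
      (by simp only [id_eq]; ring)
  exact (((hasDerivAt_lapse M Λ hr).const_mul (6 * M)).div hden (mul_ne_zero hr hd)).const_add w

theorem deriv_superpotential_add_eq_potential (M Λ μ w : ℝ) {r : ℝ} (hr : r ≠ 0)
    (hd : μ * r + 6 * M ≠ 0) :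
    deriv (superpotential M Λ μ w) r + μ * (μ + 2) / (r * (μ * r + 6 * M))
        + 36 * M ^ 2 * lapse M Λ r / (r * (μ * r + 6 * M)) ^ 2 = potential M Λ μ r := by
  rw [(hasDerivAt_superpotential M Λ μ w hr hd).deriv]
  unfold lapse potential
  field_simp
  ring

theorem lapse_mul_deriv_superpotential_add_sq_sub_sq (M Λ μ w : ℝ) {r : ℝ} (hr : r ≠ 0)
    (hd : μ * r + 6 * M ≠ 0) (hw : 12 * M * w = μ * (μ + 2)) :
    lapse M Λ r * deriv (superpotential M Λ μ w) r + superpotential M Λ μ w r ^ 2 - w ^ 2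
      = lapse M Λ r * potential M Λ μ r := by
  have hsq : superpotential M Λ μ w r ^ 2 - w ^ 2
      = lapse M Λ r * (μ * (μ + 2) / (r * (μ * r + 6 * M))
        + 36 * M ^ 2 * lapse M Λ r / (r * (μ * r + 6 * M)) ^ 2) := by
    unfold superpotential
    generalize r * (μ * r + 6 * M) = D
    linear_combination (lapse M Λ r / D) * hw
  rw [add_sub_assoc, hsq, ← deriv_superpotential_add_eq_potential M Λ μ w hr hd]
  ring

end Zerilli

end

open Zerilli in
theorem stmt_9_general (M Λ : ℝ) (hM : M ≠ 0) (ℓ : ℕ) :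
    let μ : ℝ := ((ℓ : ℝ) - 1) * ((ℓ : ℝ) + 2)
    let w : ℝ := ((ℓ : ℝ) - 1) * (ℓ : ℝ) * ((ℓ : ℝ) + 1) * ((ℓ : ℝ) + 2) / (12 * M)
    let f : ℝ → ℝ := fun r => 1 - 2 * M / r - Λ * r ^ 2 / 3
    let W : ℝ → ℝ := fun r => w + 6 * M * f r / (r * (μ * r + 6 * M))
    let VZ : ℝ → ℝ := fun r =>
      ((μ ^ 2 * (ℓ : ℝ) * ((ℓ : ℝ) + 1) - 24 * M ^ 2 * Λ) * r ^ 3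
          + 6 * μ ^ 2 * M * r ^ 2 + 36 * μ * M ^ 2 * r + 72 * M ^ 3)
        / (r ^ 3 * (μ * r + 6 * M) ^ 2)
    ∀ r : ℝ, 0 < r → μ * r + 6 * M ≠ 0 →
      f r * deriv W r + (W r) ^ 2 - w ^ 2 = f r * VZ r := by
  intro μ w f W VZ r hr hd
  have hw : 12 * M * w = μ * (μ + 2) := by
    simp only [w, μ]
    field_simp
    ring
  have hVZ : VZ r = potential M Λ μ r := by
    simp only [VZ, potential, μ]
    ring
  rw [hVZ]
  exact lapse_mul_deriv_superpotential_add_sq_sub_sq M Λ μ w hr.ne' hd hw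

/-- Chandrasekhar's Riccati identity for the Zerilli potential:
`f W' + W² - w² = f V^Z`, i.e. the factorization `H⁺ + w² = D⁺ D⁻` of the
Zerilli operator, extended to `Λ ≠ 0`. -/
theorem stmt_9 (M Λ : ℝ) (hM : M ≠ 0) (ℓ : ℕ) (hℓ : 2 ≤ ℓ) :
    let μ : ℝ := ((ℓ : ℝ) - 1) * ((ℓ : ℝ) + 2)
    let w : ℝ := ((ℓ : ℝ) - 1) * (ℓ : ℝ) * ((ℓ : ℝ) + 1) * ((ℓ : ℝ) + 2) / (12 * M)
    let f : ℝ → ℝ := fun r => 1 - 2 * M / r - Λ * r ^ 2 / 3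
    let W : ℝ → ℝ := fun r => w + 6 * M * f r / (r * (μ * r + 6 * M))
    let VZ : ℝ → ℝ := fun r =>
      ((μ ^ 2 * (ℓ : ℝ) * ((ℓ : ℝ) + 1) - 24 * M ^ 2 * Λ) * r ^ 3
          + 6 * μ ^ 2 * M * r ^ 2 + 36 * μ * M ^ 2 * r + 72 * M ^ 3)
        / (r ^ 3 * (μ * r + 6 * M) ^ 2)
    ∀ r : ℝ, 0 < r → μ * r + 6 * M ≠ 0 →
      f r * deriv W r + (W r) ^ 2 - w ^ 2 = f r * VZ r :=
  stmt_9_general M Λ hM ℓ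
end

section
/- Let M ≠ 0, Λ ∈ ℝ, ℓ ≥ 2 an integer, and let I ⊆ (0, ∞) be an open interval on which f > 0 and μr + 6M > 0. If φ : ℝ × I → ℝ is smooth and satisfies the Regge–Wheeler equation ∂_t²φ − f∂_r(f∂_rφ) + f·(ℓ(ℓ+1)/r² − 6M/r³)·φ = 0 on ℝ × I, then ψ = f∂_rφ + Wφ satisfies the Zerilli equation ∂_t²ψ − f∂_r(f∂_rψ) + f·V^Z·ψ = 0 on ℝ × I. -/
open Filter

noncomputable section ChandraAux

/-- Schwarzschild-de Sitter profile. -/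
def fS (M Λ : ℝ) : ℝ → ℝ := fun x => 1 - 2 * M / x - Λ * x ^ 2 / 3

def f1S (M Λ : ℝ) : ℝ → ℝ := fun x => 2 * M / x ^ 2 - 2 * Λ * x / 3

def WS (M Λ c m : ℝ) : ℝ → ℝ := fun x => c + 6 * M * fS M Λ x / (x * (m * x + 6 * M))

def W1S (M Λ m : ℝ) : ℝ → ℝ := fun x =>
  (6 * M * f1S M Λ x * (x * (m * x + 6 * M)) - 6 * M * fS M Λ x * (2 * m * x + 6 * M))
    / (x * (m * x + 6 * M)) ^ 2

def VRWS (M L : ℝ) : ℝ → ℝ := fun x => L * (L + 1) / x ^ 2 - 6 * M / x ^ 3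

def VZS (M Λ L : ℝ) : ℝ → ℝ := fun x =>
  ((((L-1)*(L+2)) ^ 2 * L * (L + 1) - 24 * M ^ 2 * Λ) * x ^ 3
      + 6 * ((L-1)*(L+2)) ^ 2 * M * x ^ 2 + 36 * ((L-1)*(L+2)) * M ^ 2 * x + 72 * M ^ 3)
    / (x ^ 3 * (((L-1)*(L+2)) * x + 6 * M) ^ 2)

theorem fS_hasDerivAt (M Λ x : ℝ) (hx : x ≠ 0) : HasDerivAt (fS M Λ) (f1S M Λ x) x := by
  have h1 : HasDerivAt (fun y : ℝ => 2 * M / y) ((0 * x - 2 * M * 1) / x ^ 2) x :=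
    (hasDerivAt_const x (2 * M)).div (hasDerivAt_id x) hx
  have h2 : HasDerivAt (fun y : ℝ => Λ * y ^ 2 / 3) (Λ * (↑2 * x ^ (2 - 1)) / 3) x :=
    ((hasDerivAt_pow 2 x).const_mul Λ).div_const 3
  have h := ((hasDerivAt_const x (1 : ℝ)).sub h1).sub h2
  refine h.congr_deriv ?_
  unfold f1S
  norm_num
  ring

theorem f1S_differentiableAt (M Λ x : ℝ) (hx : x ≠ 0) : DifferentiableAt ℝ (f1S M Λ) x := by
  unfold f1S
  have h1 : DifferentiableAt ℝ (fun y : ℝ => 2 * M / y ^ 2) x :=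
    (differentiableAt_const _).div (differentiableAt_fun_id.pow 2) (pow_ne_zero 2 hx)
  have h2 : DifferentiableAt ℝ (fun y : ℝ => 2 * Λ * y / 3) x :=
    (differentiableAt_fun_id.const_mul _).div_const 3
  exact h1.sub h2

theorem denom_hasDerivAt (M m x : ℝ) :
    HasDerivAt (fun y : ℝ => y * (m * y + 6 * M)) (1 * (m * x + 6 * M) + x * (m * 1)) x :=
  (hasDerivAt_id x).mul (((hasDerivAt_id x).const_mul m).add_const (6 * M))

theorem WS_hasDerivAt (M Λ c m x : ℝ) (hx : x ≠ 0) (hD : m * x + 6 * M ≠ 0) :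
    HasDerivAt (WS M Λ c m) (W1S M Λ m x) x := by
  have hN : HasDerivAt (fun y => 6 * M * fS M Λ y) (6 * M * f1S M Λ x) x :=
    (fS_hasDerivAt M Λ x hx).const_mul (6 * M)
  have hden := denom_hasDerivAt M m x
  have hne : x * (m * x + 6 * M) ≠ 0 := mul_ne_zero hx hD
  have h := (hN.div hden hne).const_add c
  refine h.congr_deriv ?_
  unfold W1S
  ring

theorem WS_differentiableAt (M Λ c m x : ℝ) (hx : x ≠ 0) (hD : m * x + 6 * M ≠ 0) :
    DifferentiableAt ℝ (WS M Λ c m) x := (WS_hasDerivAt M Λ c m x hx hD).differentiableAt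

theorem fS_differentiableAt (M Λ x : ℝ) (hx : x ≠ 0) : DifferentiableAt ℝ (fS M Λ) x :=
  (fS_hasDerivAt M Λ x hx).differentiableAt

theorem W1S_differentiableAt (M Λ m x : ℝ) (hx : x ≠ 0) (hD : m * x + 6 * M ≠ 0) :
    DifferentiableAt ℝ (W1S M Λ m) x := by
  have hne : x * (m * x + 6 * M) ≠ 0 := mul_ne_zero hx hD
  unfold W1S
  apply DifferentiableAt.div
  · exact (((f1S_differentiableAt M Λ x hx).const_mul _).mul
      ((denom_hasDerivAt M m x).differentiableAt)).sub
      (((fS_differentiableAt M Λ x hx).const_mul _).mul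
        ((differentiableAt_fun_id.const_mul (2*m)).add_const (6*M)))
  · exact ((denom_hasDerivAt M m x).differentiableAt).pow 2
  · exact pow_ne_zero 2 hne

theorem VRWS_differentiableAt (M L x : ℝ) (hx : x ≠ 0) : DifferentiableAt ℝ (VRWS M L) x := by
  unfold VRWS
  have h1 : DifferentiableAt ℝ (fun y : ℝ => L * (L + 1) / y ^ 2) x :=
    (differentiableAt_const _).div (differentiableAt_fun_id.pow 2) (pow_ne_zero 2 hx)
  have h2 : DifferentiableAt ℝ (fun y : ℝ => 6 * M / y ^ 3) x :=
    (differentiableAt_const _).div (differentiableAt_fun_id.pow 3) (pow_ne_zero 3 hx)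
  exact h1.sub h2

set_option maxHeartbeats 2000000 in
theorem keyRW (M Λ L x : ℝ) (hM : M ≠ 0) (hx : x ≠ 0) (hD : (L-1)*(L+2)*x + 6*M ≠ 0) :
    fS M Λ x * VRWS M L x
      = (WS M Λ ((L-1)*L*(L+1)*(L+2)/(12*M)) ((L-1)*(L+2)) x) ^ 2
        - fS M Λ x * W1S M Λ ((L-1)*(L+2)) x
        - ((L-1)*L*(L+1)*(L+2)/(12*M)) ^ 2 := by
  have hD' : x * ((L-1)*(L+2)*x + 6*M) ≠ 0 := mul_ne_zero hx hD
  simp only [WS, W1S, VRWS, fS, f1S]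
  generalize hDg : (L-1)*(L+2)*x + 6*M = D at hD ⊢
  field_simp
  subst hDg
  ring

set_option maxHeartbeats 2000000 in
theorem keyZ (M Λ L x : ℝ) (hM : M ≠ 0) (hx : x ≠ 0) (hD : (L-1)*(L+2)*x + 6*M ≠ 0) :
    fS M Λ x * VZS M Λ L x
      = (WS M Λ ((L-1)*L*(L+1)*(L+2)/(12*M)) ((L-1)*(L+2)) x) ^ 2
        + fS M Λ x * W1S M Λ ((L-1)*(L+2)) x
        - ((L-1)*L*(L+1)*(L+2)/(12*M)) ^ 2 := by
  have hD' : x * ((L-1)*(L+2)*x + 6*M) ≠ 0 := mul_ne_zero hx hD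
  simp only [WS, W1S, VZS, fS, f1S]
  generalize hDg : (L-1)*(L+2)*x + 6*M = D at hD ⊢
  field_simp
  subst hDg
  ring

theorem chandra_core (M Λ L : ℝ) (hM : M ≠ 0) (u u1 u2 g : ℝ → ℝ) (r : ℝ)
    (hreg : ∀ᶠ x in nhds r,
      (0 < x ∧ 0 < (L-1)*(L+2) * x + 6 * M)
      ∧ HasDerivAt u (u1 x) x ∧ HasDerivAt u1 (u2 x) x ∧ DifferentiableAt ℝ u2 x
      ∧ g x = fS M Λ x * deriv (fun s => fS M Λ s * deriv u s) x
              - fS M Λ x * VRWS M L x * u x) :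
    fS M Λ r * deriv g r + WS M Λ ((L-1)*L*(L+1)*(L+2)/(12*M)) ((L-1)*(L+2)) r * g r
      - fS M Λ r * deriv (fun x => fS M Λ x *
          deriv (fun s => fS M Λ s * deriv u s
            + WS M Λ ((L-1)*L*(L+1)*(L+2)/(12*M)) ((L-1)*(L+2)) s * u s) x) r
      + fS M Λ r * VZS M Λ L r *
          (fS M Λ r * deriv u r
            + WS M Λ ((L-1)*L*(L+1)*(L+2)/(12*M)) ((L-1)*(L+2)) r * u r) = 0 := by
  set m := (L-1)*(L+2) with hm
  set c := (L-1)*L*(L+1)*(L+2)/(12*M) with hc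
  obtain ⟨⟨hr0, hDr⟩, hur, hu1r, hu2r, hgr⟩ := hreg.self_of_nhds
  have hrne : r ≠ 0 := ne_of_gt hr0
  have hDne : m * r + 6 * M ≠ 0 := ne_of_gt hDr
  have hu_ev : ∀ᶠ x in nhds r, deriv u x = u1 x := hreg.mono fun x hx => hx.2.1.deriv
  have hps : ∀ᶠ x in nhds r, HasDerivAt (fun s => fS M Λ s * deriv u s)
      (f1S M Λ x * u1 x + fS M Λ x * u2 x) x := by
    filter_upwards [hreg, hu_ev.eventually_nhds] with x hx hx'
    have h0 : HasDerivAt (fun s => fS M Λ s * u1 s)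
        (f1S M Λ x * u1 x + fS M Λ x * u2 x) x :=
      (fS_hasDerivAt M Λ x (ne_of_gt hx.1.1)).mul hx.2.2.1
    exact h0.congr_of_eventuallyEq (hx'.mono fun y hy => by simp only [hy])
  have hps_d : ∀ᶠ x in nhds r, deriv (fun s => fS M Λ s * deriv u s) x
      = f1S M Λ x * u1 x + fS M Λ x * u2 x := hps.mono fun x hx => hx.deriv
  have hg_ev : ∀ᶠ x in nhds r, g x
      = fS M Λ x * (f1S M Λ x * u1 x + fS M Λ x * u2 x) - fS M Λ x * VRWS M L x * u x := by
    filter_upwards [hreg, hps_d] with x hx hx2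
    rw [hx.2.2.2.2, hx2]
  have hGdiff : DifferentiableAt ℝ
      (fun x => fS M Λ x * (f1S M Λ x * u1 x + fS M Λ x * u2 x)
        - fS M Λ x * VRWS M L x * u x) r := by
    have h1 := fS_differentiableAt M Λ r hrne
    have h2 := f1S_differentiableAt M Λ r hrne
    have h3 := VRWS_differentiableAt M L r hrne
    exact (h1.mul ((h2.mul hu1r.differentiableAt).add (h1.mul hu2r))).sub
      ((h1.mul h3).mul hur.differentiableAt)
  have hgdiff : DifferentiableAt ℝ g r := (Filter.EventuallyEq.differentiableAt_iff hg_ev).mpr hGdiff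
  have hdg : HasDerivAt g (deriv g r) r := hgdiff.hasDerivAt
  set q : ℝ → ℝ := fun x => f1S M Λ x * u1 x + fS M Λ x * u2 x
      + (W1S M Λ m x * u x + WS M Λ c m x * u1 x) with hqdef
  have hqs : ∀ᶠ x in nhds r, HasDerivAt
      (fun s => fS M Λ s * deriv u s + WS M Λ c m s * u s) (q x) x := by
    filter_upwards [hps, hreg] with x hx1 hx2
    exact hx1.add ((WS_hasDerivAt M Λ c m x (ne_of_gt hx2.1.1) (ne_of_gt hx2.1.2)).mul hx2.2.1)
  have hq_d : ∀ᶠ x in nhds r, deriv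
      (fun s => fS M Λ s * deriv u s + WS M Λ c m s * u s) x = q x :=
    hqs.mono fun x hx => hx.deriv
  have hqdiff : DifferentiableAt ℝ q r := by
    have h1 := fS_differentiableAt M Λ r hrne
    have h2 := f1S_differentiableAt M Λ r hrne
    have h4 := W1S_differentiableAt M Λ m r hrne hDne
    have h5 := WS_differentiableAt M Λ c m r hrne hDne
    exact ((h2.mul hu1r.differentiableAt).add (h1.mul hu2r)).add
      ((h4.mul hur.differentiableAt).add (h5.mul hu1r.differentiableAt))
  have hdq : HasDerivAt q (deriv q r) r := hqdiff.hasDerivAt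
  have houter : HasDerivAt
      (fun x => fS M Λ x * deriv (fun s => fS M Λ s * deriv u s + WS M Λ c m s * u s) x)
      (f1S M Λ r * q r + fS M Λ r * deriv q r) r := by
    have h0 : HasDerivAt (fun x => fS M Λ x * q x)
        (f1S M Λ r * q r + fS M Λ r * deriv q r) r := (fS_hasDerivAt M Λ r hrne).mul hdq
    exact h0.congr_of_eventuallyEq (hq_d.mono fun y hy => by simp only [hy])
  have hpsifull : HasDerivAt (fun x => fS M Λ x * u1 x + WS M Λ c m x * u x) (q r) r := by
    have h0 : HasDerivAt (fun s => fS M Λ s * deriv u s + WS M Λ c m s * u s) (q r) r :=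
      hqs.self_of_nhds
    exact h0.congr_of_eventuallyEq (hu_ev.mono fun y hy => by simp only [hy])
  have hh : HasDerivAt
      (fun x => -(fS M Λ x * q x) + WS M Λ c m x * (fS M Λ x * u1 x + WS M Λ c m x * u x))
      (-(f1S M Λ r * q r + fS M Λ r * deriv q r)
        + (W1S M Λ m r * (fS M Λ r * u1 r + WS M Λ c m r * u r) + WS M Λ c m r * q r)) r :=
    (((fS_hasDerivAt M Λ r hrne).mul hdq).neg).add
      ((WS_hasDerivAt M Λ c m r hrne hDne).mul hpsifull)
  have hh_ev : (fun x => -(fS M Λ x * q x)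
        + WS M Λ c m x * (fS M Λ x * u1 x + WS M Λ c m x * u x))
      =ᶠ[nhds r] (fun x => -g x + c^2 * u x) := by
    filter_upwards [hg_ev, hreg] with x hgx hx
    have key := keyRW M Λ L x hM (ne_of_gt hx.1.1) (ne_of_gt hx.1.2)
    rw [← hm, ← hc] at key
    simp only [hgx, hqdef]
    linear_combination (-(u x)) * key
  have hh2 : HasDerivAt (fun x => -g x + c^2 * u x) (-(deriv g r) + c^2 * u1 r) r :=
    hdg.neg.add (hur.const_mul (c^2))
  have star : -(f1S M Λ r * q r + fS M Λ r * deriv q r)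
        + (W1S M Λ m r * (fS M Λ r * u1 r + WS M Λ c m r * u r) + WS M Λ c m r * q r)
      = -(deriv g r) + c^2 * u1 r := by
    rw [← hh.deriv, ← hh2.deriv]
    exact hh_ev.deriv_eq
  have hgr2 : g r = fS M Λ r * q r
      - WS M Λ c m r * (fS M Λ r * u1 r + WS M Λ c m r * u r) + c^2 * u r := by
    have h0 := hh_ev.self_of_nhds
    simp only at h0
    linarith [h0]
  have k2 := keyZ M Λ L r hM hrne (by rw [hm] at hDne; exact hDne)
  rw [← hm, ← hc] at k2
  rw [hur.deriv, houter.deriv]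
  linear_combination fS M Λ r * star + (fS M Λ r * u1 r + WS M Λ c m r * u r) * k2
    + WS M Λ c m r * hgr2

/-- First partial derivative in the `t` (first) direction. -/
def ptD (G : ℝ × ℝ → ℝ) : ℝ × ℝ → ℝ := fun q => fderiv ℝ G q (1, 0)

/-- First partial derivative in the `r` (second) direction. -/
def prD (G : ℝ × ℝ → ℝ) : ℝ × ℝ → ℝ := fun q => fderiv ℝ G q (0, 1)

theorem contDiffAt_ptD {G : ℝ × ℝ → ℝ} {p : ℝ × ℝ} (h : ContDiffAt ℝ (⊤ : ℕ∞) G p) :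
    ContDiffAt ℝ (⊤ : ℕ∞) (ptD G) p :=
  ((ContinuousLinearMap.apply ℝ ℝ ((1, 0) : ℝ × ℝ)).contDiff.contDiffAt).comp p
    (h.fderiv_right (by simp))

theorem contDiffAt_prD {G : ℝ × ℝ → ℝ} {p : ℝ × ℝ} (h : ContDiffAt ℝ (⊤ : ℕ∞) G p) :
    ContDiffAt ℝ (⊤ : ℕ∞) (prD G) p :=
  ((ContinuousLinearMap.apply ℝ ℝ ((0, 1) : ℝ × ℝ)).contDiff.contDiffAt).comp p
    (h.fderiv_right (by simp))

theorem hasDerivAt_fst {G : ℝ × ℝ → ℝ} {t r : ℝ} (h : DifferentiableAt ℝ G (t, r)) :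
    HasDerivAt (fun t' => G (t', r)) (ptD G (t, r)) t := by
  have h2 : HasDerivAt (fun t' : ℝ => ((t', r) : ℝ × ℝ)) ((1, 0) : ℝ × ℝ) t :=
    (hasDerivAt_id t).prodMk (hasDerivAt_const t r)
  exact h.hasFDerivAt.comp_hasDerivAt t h2

theorem hasDerivAt_snd {G : ℝ × ℝ → ℝ} {t r : ℝ} (h : DifferentiableAt ℝ G (t, r)) :
    HasDerivAt (fun r' => G (t, r')) (prD G (t, r)) r := by
  have h2 : HasDerivAt (fun r' : ℝ => ((t, r') : ℝ × ℝ)) ((0, 1) : ℝ × ℝ) r :=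
    (hasDerivAt_const r t).prodMk (hasDerivAt_id r)
  exact h.hasFDerivAt.comp_hasDerivAt r h2

theorem clairautD {G : ℝ × ℝ → ℝ} {p : ℝ × ℝ} (h : ContDiffAt ℝ (⊤ : ℕ∞) G p) :
    ptD (prD G) p = prD (ptD G) p := by
  have hsym : IsSymmSndFDerivAt ℝ G p := h.isSymmSndFDerivAt (by rw [minSmoothness_of_isRCLikeNormedField]; exact (WithTop.coe_le_coe.mpr (le_top : (2:ℕ∞) ≤ ⊤)))
  have hd : DifferentiableAt ℝ (fderiv ℝ G) p :=
    (h.fderiv_right (by exact_mod_cast le_top : ((⊤ : ℕ∞) : WithTop ℕ∞) + 1 ≤ ((⊤ : ℕ∞) : WithTop ℕ∞))).differentiableAt (by simp)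
  unfold ptD prD
  rw [show (fun q => fderiv ℝ G q (0, 1)) = fun q => (fderiv ℝ G q) ((fun _ => ((0,1) : ℝ × ℝ)) q) from rfl]
  rw [show (fun q => fderiv ℝ G q (1, 0)) = fun q => (fderiv ℝ G q) ((fun _ => ((1,0) : ℝ × ℝ)) q) from rfl]
  rw [fderiv_clm_apply hd (differentiableAt_const _), fderiv_clm_apply hd (differentiableAt_const _)]
  simp [hsym.eq (1, 0) (0, 1)]

end ChandraAux

/-- The wave operator `∂_t²φ - f ∂_r(f ∂_r φ) + f V φ` acting on a function
`φ(t, r)`, in Schwarzschild-type coordinates (`∂_{r*} = f ∂_r`). -/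
noncomputable def waveOp (f V : ℝ → ℝ) (φ : ℝ → ℝ → ℝ) (t r : ℝ) : ℝ :=
  deriv (deriv (fun t' => φ t' r)) t
    - f r * deriv (fun r' => f r' * deriv (fun r'' => φ t r'') r') r
    + f r * V r * φ t r

/-- Chandrasekhar duality: `D⁺ = f∂_r + W` maps smooth solutions of the
Regge-Wheeler equation on `ℝ × I` to solutions of the Zerilli equation. -/
theorem stmt_10 (M Λ : ℝ) (hM : M ≠ 0) (ℓ : ℕ) (hℓ : 2 ≤ ℓ) (a b : ℝ)
    (hI : Set.Ioo a b ⊆ Set.Ioi (0 : ℝ)) :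
    let μ : ℝ := ((ℓ : ℝ) - 1) * ((ℓ : ℝ) + 2)
    let w : ℝ := ((ℓ : ℝ) - 1) * (ℓ : ℝ) * ((ℓ : ℝ) + 1) * ((ℓ : ℝ) + 2) / (12 * M)
    let f : ℝ → ℝ := fun r => 1 - 2 * M / r - Λ * r ^ 2 / 3
    let W : ℝ → ℝ := fun r => w + 6 * M * f r / (r * (μ * r + 6 * M))
    let VRW : ℝ → ℝ := fun r => (ℓ : ℝ) * ((ℓ : ℝ) + 1) / r ^ 2 - 6 * M / r ^ 3
    let VZ : ℝ → ℝ := fun r =>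
      ((μ ^ 2 * (ℓ : ℝ) * ((ℓ : ℝ) + 1) - 24 * M ^ 2 * Λ) * r ^ 3
          + 6 * μ ^ 2 * M * r ^ 2 + 36 * μ * M ^ 2 * r + 72 * M ^ 3)
        / (r ^ 3 * (μ * r + 6 * M) ^ 2)
    (∀ r ∈ Set.Ioo a b, 0 < f r) →
    (∀ r ∈ Set.Ioo a b, 0 < μ * r + 6 * M) →
    ∀ φ : ℝ → ℝ → ℝ,
      ContDiffOn ℝ (⊤ : ℕ∞) (fun p : ℝ × ℝ => φ p.1 p.2) (Set.univ ×ˢ Set.Ioo a b) →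
      (∀ t : ℝ, ∀ r ∈ Set.Ioo a b, waveOp f VRW φ t r = 0) →
      ∀ t : ℝ, ∀ r ∈ Set.Ioo a b,
        waveOp f VZ
          (fun t' r' => f r' * deriv (fun s => φ t' s) r' + W r' * φ t' r')
          t r = 0 := by
  intro μ w f W VRW VZ hfpos hDpos φ hφ hRW t r hr
  have hfeq : f = fS M Λ := rfl
  have hWeq : W = WS M Λ (((ℓ:ℝ)-1)*(ℓ:ℝ)*((ℓ:ℝ)+1)*((ℓ:ℝ)+2)/(12*M))
      (((ℓ:ℝ)-1)*((ℓ:ℝ)+2)) := rfl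
  have hVRWeq : VRW = VRWS M (ℓ:ℝ) := rfl
  have hVZeq : VZ = VZS M Λ (ℓ:ℝ) := rfl
  simp only [waveOp, hfeq, hWeq, hVRWeq, hVZeq] at hRW ⊢
  set cv := ((ℓ:ℝ)-1)*(ℓ:ℝ)*((ℓ:ℝ)+1)*((ℓ:ℝ)+2)/(12*M) with hcv
  set mv := ((ℓ:ℝ)-1)*((ℓ:ℝ)+2) with hmv
  have hUopen : IsOpen ((Set.univ : Set ℝ) ×ˢ Set.Ioo a b) := isOpen_univ.prod isOpen_Ioo
  have hmem : ∀ (t' x : ℝ), x ∈ Set.Ioo a b →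
      ((t', x) : ℝ × ℝ) ∈ (Set.univ : Set ℝ) ×ˢ Set.Ioo a b :=
    fun t' x hx => Set.mk_mem_prod trivial hx
  set F : ℝ × ℝ → ℝ := fun p => φ p.1 p.2 with hFdef
  have hFC : ∀ (t' x : ℝ), x ∈ Set.Ioo a b → ContDiffAt ℝ (⊤ : ℕ∞) F (t', x) :=
    fun t' x hx => hφ.contDiffAt (hUopen.mem_nhds (hmem t' x hx))
  have hFd : ∀ (t' x : ℝ), x ∈ Set.Ioo a b → DifferentiableAt ℝ F (t', x) :=
    fun t' x hx => (hFC t' x hx).differentiableAt (by simp)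
  have hPrC : ∀ (t' x : ℝ), x ∈ Set.Ioo a b → ContDiffAt ℝ (⊤ : ℕ∞) (prD F) (t', x) :=
    fun t' x hx => contDiffAt_prD (hFC t' x hx)
  have hPtC : ∀ (t' x : ℝ), x ∈ Set.Ioo a b → ContDiffAt ℝ (⊤ : ℕ∞) (ptD F) (t', x) :=
    fun t' x hx => contDiffAt_ptD (hFC t' x hx)
  have hds : ∀ (t' x : ℝ), x ∈ Set.Ioo a b →
      HasDerivAt (fun s => φ t' s) (prD F (t', x)) x :=
    fun t' x hx => hasDerivAt_snd (hFd t' x hx)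
  have hdt : ∀ (t' x : ℝ), x ∈ Set.Ioo a b →
      HasDerivAt (fun t'' => φ t'' x) (ptD F (t', x)) t' :=
    fun t' x hx => hasDerivAt_fst (hFd t' x hx)
  set g : ℝ → ℝ := fun x => ptD (ptD F) (t, x) with hgdef
  -- the regularity package for the core lemma
  have hreg : ∀ᶠ x in nhds r,
      (0 < x ∧ 0 < ((ℓ:ℝ)-1)*((ℓ:ℝ)+2) * x + 6 * M)
      ∧ HasDerivAt (fun s => φ t s) ((fun y => prD F (t, y)) x) x
      ∧ HasDerivAt (fun y => prD F (t, y)) ((fun y => prD (prD F) (t, y)) x) x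
      ∧ DifferentiableAt ℝ (fun y => prD (prD F) (t, y)) x
      ∧ g x = fS M Λ x * deriv (fun s => fS M Λ s * deriv (fun s' => φ t s') s) x
              - fS M Λ x * VRWS M (ℓ:ℝ) x * φ t x := by
    filter_upwards [isOpen_Ioo.mem_nhds hr] with x hx
    refine ⟨⟨hI hx, hDpos x hx⟩, hds t x hx,
      hasDerivAt_snd ((hPrC t x hx).differentiableAt (by simp)),
      (hasDerivAt_snd ((contDiffAt_prD (hPrC t x hx)).differentiableAt (by simp))).differentiableAt,
      ?_⟩
    have hA : g x = deriv (deriv (fun t' => φ t' x)) t := by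
      have e2 : deriv (fun t' => φ t' x) = fun t₁ => ptD F (t₁, x) :=
        funext fun t₁ => (hdt t₁ x hx).deriv
      rw [e2]
      exact ((hasDerivAt_fst ((hPtC t x hx).differentiableAt (by simp))).deriv).symm
    have hB := hRW t x hx
    rw [hA]
    linarith [hB]
  -- computation of the time part
  have e1 : (fun t' => fS M Λ r * deriv (fun s => φ t' s) r + WS M Λ cv mv r * φ t' r)
      = fun t' => fS M Λ r * prD F (t', r) + WS M Λ cv mv r * φ t' r :=
    funext fun t' => by rw [(hds t' r hr).deriv]
  have e2 : deriv (fun t' => fS M Λ r * deriv (fun s => φ t' s) r + WS M Λ cv mv r * φ t' r)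
      = fun t₁ => fS M Λ r * ptD (prD F) (t₁, r) + WS M Λ cv mv r * ptD F (t₁, r) := by
    funext t₁
    rw [e1]
    exact (((hasDerivAt_fst ((hPrC t₁ r hr).differentiableAt (by simp))).const_mul
      (fS M Λ r)).add ((hdt t₁ r hr).const_mul (WS M Λ cv mv r))).deriv
  have e3 : deriv (deriv
        (fun t' => fS M Λ r * deriv (fun s => φ t' s) r + WS M Λ cv mv r * φ t' r)) t
      = fS M Λ r * ptD (ptD (prD F)) (t, r) + WS M Λ cv mv r * ptD (ptD F) (t, r) := by
    rw [e2]
    exact (((hasDerivAt_fst ((contDiffAt_ptD (hPrC t r hr)).differentiableAt (by simp))).const_mul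
      (fS M Λ r)).add
      ((hasDerivAt_fst ((hPtC t r hr).differentiableAt (by simp))).const_mul
        (WS M Λ cv mv r))).deriv
  have hgder : HasDerivAt g (prD (ptD (ptD F)) (t, r)) r :=
    hasDerivAt_snd ((contDiffAt_ptD (contDiffAt_ptD (hFC t r hr))).differentiableAt (by simp))
  have hswap : ptD (ptD (prD F)) (t, r) = prD (ptD (ptD F)) (t, r) := by
    have h1 : ptD (prD F) =ᶠ[nhds ((t, r) : ℝ × ℝ)] prD (ptD F) :=
      Filter.eventually_of_mem (hUopen.mem_nhds (hmem t r hr))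
        (fun p hp => clairautD (hφ.contDiffAt (hUopen.mem_nhds hp)))
    have h2 : fderiv ℝ (ptD (prD F)) (t, r) = fderiv ℝ (prD (ptD F)) (t, r) := h1.fderiv_eq
    have h3 : ptD (ptD (prD F)) (t, r) = ptD (prD (ptD F)) (t, r) := by
      show fderiv ℝ (ptD (prD F)) (t, r) (1, 0) = fderiv ℝ (prD (ptD F)) (t, r) (1, 0)
      rw [h2]
    exact h3.trans (clairautD (contDiffAt_ptD (hFC t r hr)))
  have e4 : deriv (deriv
        (fun t' => fS M Λ r * deriv (fun s => φ t' s) r + WS M Λ cv mv r * φ t' r)) t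
      = fS M Λ r * deriv g r + WS M Λ cv mv r * g r := by
    rw [e3, hswap, ← hgder.deriv]
  rw [e4]
  exact chandra_core M Λ (ℓ:ℝ) hM (fun s => φ t s) (fun y => prD F (t, y))
    (fun y => prD (prD F) (t, y)) g r hreg
end

section
/- Let M ≠ 0, Λ ∈ ℝ, ℓ ≥ 2 an integer, I ⊆ (0, ∞) an open interval on which f > 0 and μr + 6M > 0, and let ρ : I → ℝ be differentiable with ρ'(r) = 1/f(r). Then for each sign ε ∈ {+1, −1}, the function φ(t, r) = r·e^{w(ρ(r) + ε t)}/(μr + 6M) satisfies the Zerilli equation ∂_t²φ − f∂_r(f∂_rφ) + f·V^Z·φ = 0 on ℝ × I. -/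
/-!
Write `φ = g(r) e^{w(ρ(r) + εt)}` with `g = r/(μr + 6M)`. Since `ρ' = 1/f`, the flux is
`f ∂_r φ = (f g' + w g) e^{w(ρ + εt)}`, and the `w²` coming from `∂_t²` cancels the one from
differentiating the exponential twice in `r` because `ε² = 1`. The Zerilli equation thus
collapses to the exponential-free equation `(f g')' + 2 w g' = V^Z g`, which for
`g' = 6M/(μr + 6M)²` is a rational identity once `ℓ(ℓ + 1)` is written as `μ + 2`.
-/

open Filter Topology Real

lemma deriv_const_mul_exp_affine (a w p ε : ℝ) :
    deriv (fun t => a * exp (w * (p + ε * t)))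
      = fun t => w * ε * (a * exp (w * (p + ε * t))) := by
  funext t
  have hlin : HasDerivAt (fun t => p + ε * t) ε t := by
    simpa using ((hasDerivAt_id t).const_mul ε).const_add p
  rw [((hlin.const_mul w).exp.const_mul a).deriv]
  ring

lemma deriv_deriv_const_mul_exp_affine (a w p ε t : ℝ) :
    deriv (deriv fun t => a * exp (w * (p + ε * t))) t
      = (w * ε) ^ 2 * (a * exp (w * (p + ε * t))) := by
  simp only [deriv_const_mul_exp_affine, ← mul_assoc (w * ε) a]
  ring

section Tortoise

variable {f V g g' ρ : ℝ → ℝ} {w c x : ℝ}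

lemma hasDerivAt_mul_exp_tortoise (hρ : HasDerivAt ρ (1 / f x) x) (hg : HasDerivAt g (g' x) x) :
    HasDerivAt (fun y => g y * exp (w * (ρ y + c)))
      ((g' x + w * g x / f x) * exp (w * (ρ x + c))) x :=
  (hg.mul ((hρ.add_const c).const_mul w).exp).congr_deriv (by ring)

theorem waveOp_mul_exp_tortoise {s : Set ℝ} {ε D t r : ℝ} (hs : s ∈ 𝓝 r)
    (hf : ∀ x ∈ s, f x ≠ 0)
    (hρ : ∀ x ∈ s, HasDerivAt ρ (1 / f x) x) (hg : ∀ x ∈ s, HasDerivAt g (g' x) x)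
    (hD : HasDerivAt (fun x => f x * g' x) D r) (hε : ε ^ 2 = 1) :
    waveOp f V (fun t x => g x * exp (w * (ρ x + ε * t))) t r
      = f r * (V r * g r - D - 2 * w * g' r) * exp (w * (ρ r + ε * t)) := by
  have hr : r ∈ s := mem_of_mem_nhds hs
  have hflux : (fun x => f x * deriv (fun y => g y * exp (w * (ρ y + ε * t))) x)
      =ᶠ[𝓝 r] fun x => (f x * g' x + w * g x) * exp (w * (ρ x + ε * t)) := by
    filter_upwards [hs] with x hx
    rw [(hasDerivAt_mul_exp_tortoise (hρ x hx) (hg x hx)).deriv]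
    field_simp [hf x hx]
  have hflux' : HasDerivAt (fun x => (f x * g' x + w * g x) * exp (w * (ρ x + ε * t)))
      ((D + w * g' r) * exp (w * (ρ r + ε * t))
        + (f r * g' r + w * g r) * (exp (w * (ρ r + ε * t)) * (w * (1 / f r)))) r :=
    (hD.add ((hg r hr).const_mul w)).mul (((hρ r hr).add_const (ε * t)).const_mul w).exp
  rw [waveOp, deriv_deriv_const_mul_exp_affine, hflux.deriv_eq, hflux'.deriv]
  have hf_inv : f r * (1 / f r) = 1 := mul_one_div_cancel (hf r hr)
  linear_combination (w ^ 2 * g r * exp (w * (ρ r + ε * t))) * hε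
    - ((f r * g' r + w * g r) * exp (w * (ρ r + ε * t)) * w) * hf_inv

end Tortoise

lemma hasDerivAt_div_affine (μ k : ℝ) {x : ℝ} (hx : μ * x + k ≠ 0) :
    HasDerivAt (fun y => y / (μ * y + k)) (k / (μ * x + k) ^ 2) x := by
  have hlin : HasDerivAt (fun y => μ * y + k) μ x := by
    simpa using ((hasDerivAt_id x).const_mul μ).add_const k
  exact ((hasDerivAt_id x).div hlin hx).congr_deriv (by simp only [id]; field_simp; ring)

lemma hasDerivAt_div_affine_sq (μ k c : ℝ) {x : ℝ} (hx : μ * x + k ≠ 0) :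
    HasDerivAt (fun y => c / (μ * y + k) ^ 2) (-2 * c * μ / (μ * x + k) ^ 3) x := by
  have hlin : HasDerivAt (fun y => μ * y + k) μ x := by
    simpa using ((hasDerivAt_id x).const_mul μ).add_const k
  exact (((hlin.pow 2).inv (pow_ne_zero 2 hx)).const_mul c).congr_deriv
    (by simp only [Pi.pow_apply]; field_simp; ring)

lemma hasDerivAt_kottler_lapse (M Λ : ℝ) {x : ℝ} (hx : x ≠ 0) :
    HasDerivAt (fun y => 1 - 2 * M / y - Λ * y ^ 2 / 3) (2 * M / x ^ 2 - 2 * Λ * x / 3) x := by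
  have h := ((hasDerivAt_const x 1).sub
    ((hasDerivAt_const x (2 * M)).div (hasDerivAt_id' x) hx)).sub
    (((hasDerivAt_pow 2 x).const_mul Λ).div_const 3)
  exact h.congr_deriv (by field_simp; ring)

lemma zerilli_algebraically_special (M Λ μ r : ℝ) (hM : M ≠ 0) (hr : r ≠ 0)
    (hd : μ * r + 6 * M ≠ 0) :
    ((μ ^ 2 * (μ + 2) - 24 * M ^ 2 * Λ) * r ^ 3 + 6 * μ ^ 2 * M * r ^ 2 + 36 * μ * M ^ 2 * r
        + 72 * M ^ 3) / (r ^ 3 * (μ * r + 6 * M) ^ 2) * (r / (μ * r + 6 * M))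
      = (2 * M / r ^ 2 - 2 * Λ * r / 3) * (6 * M / (μ * r + 6 * M) ^ 2)
        + (1 - 2 * M / r - Λ * r ^ 2 / 3) * (-2 * (6 * M) * μ / (μ * r + 6 * M) ^ 3)
        + 2 * (μ * (μ + 2) / (12 * M)) * (6 * M / (μ * r + 6 * M) ^ 2) := by
  -- the denominator in the form `field_simp` normalizes it to
  have hd' : μ * r + M * 6 ≠ 0 := by rwa [mul_comm M]
  field_simp
  ring

theorem stmt_13_general (M Λ : ℝ) (hM : M ≠ 0) (ℓ : ℕ) (a b : ℝ)
    (hI : Set.Ioo a b ⊆ Set.Ioi (0 : ℝ)) :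
    let μ : ℝ := ((ℓ : ℝ) - 1) * ((ℓ : ℝ) + 2)
    let w : ℝ := ((ℓ : ℝ) - 1) * (ℓ : ℝ) * ((ℓ : ℝ) + 1) * ((ℓ : ℝ) + 2) / (12 * M)
    let f : ℝ → ℝ := fun r => 1 - 2 * M / r - Λ * r ^ 2 / 3
    let VZ : ℝ → ℝ := fun r =>
      ((μ ^ 2 * (ℓ : ℝ) * ((ℓ : ℝ) + 1) - 24 * M ^ 2 * Λ) * r ^ 3
          + 6 * μ ^ 2 * M * r ^ 2 + 36 * μ * M ^ 2 * r + 72 * M ^ 3)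
        / (r ^ 3 * (μ * r + 6 * M) ^ 2)
    (∀ r ∈ Set.Ioo a b, 0 < f r) →
    (∀ r ∈ Set.Ioo a b, 0 < μ * r + 6 * M) →
    ∀ ρ : ℝ → ℝ, (∀ r ∈ Set.Ioo a b, HasDerivAt ρ (1 / f r) r) →
      ∀ ε : ℝ, (ε = 1 ∨ ε = -1) →
        ∀ t : ℝ, ∀ r ∈ Set.Ioo a b,
          waveOp f VZ
            (fun t' r' => r' * Real.exp (w * (ρ r' + ε * t')) / (μ * r' + 6 * M))
            t r = 0 := by
  intro μ w f VZ hf hd ρ hρ ε hε t r hr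
  have hr0 : r ≠ 0 := (hI hr).ne'
  have hφ : (fun t' r' => r' * exp (w * (ρ r' + ε * t')) / (μ * r' + 6 * M))
      = fun t' r' => r' / (μ * r' + 6 * M) * exp (w * (ρ r' + ε * t')) := by
    funext t' r'
    ring
  have hD := (hasDerivAt_kottler_lapse M Λ hr0).mul
    (hasDerivAt_div_affine_sq μ (6 * M) (6 * M) (hd r hr).ne')
  rw [hφ, waveOp_mul_exp_tortoise (Ioo_mem_nhds hr.1 hr.2) (fun x hx => (hf x hx).ne') hρ
    (fun x hx => hasDerivAt_div_affine μ (6 * M) (hd x hx).ne') hD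
    (by rcases hε with rfl | rfl <;> norm_num)]
  have hw : w = μ * (μ + 2) / (12 * M) := by simp only [w, μ]; ring
  have hV : VZ r = ((μ ^ 2 * (μ + 2) - 24 * M ^ 2 * Λ) * r ^ 3 + 6 * μ ^ 2 * M * r ^ 2
      + 36 * μ * M ^ 2 * r + 72 * M ^ 3) / (r ^ 3 * (μ * r + 6 * M) ^ 2) := by
    simp only [VZ, μ]; ring
  rw [hw, hV, zerilli_algebraically_special M Λ μ r hM hr0 (hd r hr).ne']
  ring

/-- The Chandrasekhar algebraically special solutions: for each sign `ε = ±1`,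
`φ(t,r) = r e^{w(ρ(r) + ε t)}/(μr + 6M)` solves the Zerilli equation, `ρ` being
a tortoise coordinate (`ρ' = 1/f`). -/
theorem stmt_13 (M Λ : ℝ) (hM : M ≠ 0) (ℓ : ℕ) (hℓ : 2 ≤ ℓ) (a b : ℝ)
    (hI : Set.Ioo a b ⊆ Set.Ioi (0 : ℝ)) :
    let μ : ℝ := ((ℓ : ℝ) - 1) * ((ℓ : ℝ) + 2)
    let w : ℝ := ((ℓ : ℝ) - 1) * (ℓ : ℝ) * ((ℓ : ℝ) + 1) * ((ℓ : ℝ) + 2) / (12 * M)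
    let f : ℝ → ℝ := fun r => 1 - 2 * M / r - Λ * r ^ 2 / 3
    let VZ : ℝ → ℝ := fun r =>
      ((μ ^ 2 * (ℓ : ℝ) * ((ℓ : ℝ) + 1) - 24 * M ^ 2 * Λ) * r ^ 3
          + 6 * μ ^ 2 * M * r ^ 2 + 36 * μ * M ^ 2 * r + 72 * M ^ 3)
        / (r ^ 3 * (μ * r + 6 * M) ^ 2)
    (∀ r ∈ Set.Ioo a b, 0 < f r) →
    (∀ r ∈ Set.Ioo a b, 0 < μ * r + 6 * M) →
    ∀ ρ : ℝ → ℝ, (∀ r ∈ Set.Ioo a b, HasDerivAt ρ (1 / f r) r) →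
      ∀ ε : ℝ, (ε = 1 ∨ ε = -1) →
        ∀ t : ℝ, ∀ r ∈ Set.Ioo a b,
          waveOp f VZ
            (fun t' r' => r' * Real.exp (w * (ρ r' + ε * t')) / (μ * r' + 6 * M))
            t r = 0 :=
  stmt_13_general M Λ hM ℓ a b hI
end

section
/- Let M > 0, Λ < 0, ℓ ≥ 2 an integer, let r_h be the unique positive root of f, and let r*(r) = −∫_r^∞ ds/f(s) for r > r_h (the integral converges). Then ∫_{r_h}^∞ \big( r·e^{w·r*(r)}/(μr + 6M) \big)² · (1/f(r)) dr < ∞; that is, the mode χ⁺(r) = r·e^{w·r*(r)}/(μr + 6M), expressed in the tortoise coordinate, is square integrable on (−∞, 0) with respect to dr*. -/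
/-!
In the tortoise coordinate `x = r*(r)` the measure `dr / f` becomes `dx`, and `x` ranges
over `(-∞, 0]`. Since `r / (μ r + 6M) ≤ 1 / μ`, the integrand is at most `μ⁻² e^{2 w x}`,
which is integrable on `(-∞, 0]`. The change of variables is legitimate because `r*` has derivative
`1 / f > 0` on `(r_h, ∞)`. Both this and the convergence of `r*` come from the factorisation
`f(s) = (s - r_h) (2M / (s r_h) - Λ (s + r_h) / 3)`, which makes `f` positive beyond `r_h` and
quadratically growing at infinity.
-/

open MeasureTheory Set Filter Topology

theorem hasDerivAt_integral_Ioi {g : ℝ → ℝ} {a r : ℝ} (har : a < r)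
    (hg : IntegrableOn g (Ioi a)) (hr : ContinuousAt g r) :
    HasDerivAt (fun x => ∫ s in Ioi x, g s) (-g r) r := by
  have hsplit : (fun x => (∫ s in Ioi a, g s) - ∫ s in a..x, g s) =ᶠ[𝓝 r]
      fun x => ∫ s in Ioi x, g s := by
    filter_upwards [Ioi_mem_nhds har] with x hx
    rw [← intervalIntegral.integral_interval_add_Ioi hg (hg.mono_set (Ioi_subset_Ioi hx.le))]
    ring
  have hint : IntervalIntegrable g volume a r :=
    (intervalIntegrable_iff_integrableOn_Ioc_of_le har.le).2 (hg.mono_set Ioc_subset_Ioi_self)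
  have hmeas : StronglyMeasurableAtFilter g (𝓝 r) :=
    AEStronglyMeasurable.stronglyMeasurableAtFilter_of_mem hg.aestronglyMeasurable
      (Ioi_mem_nhds har)
  simpa using ((intervalIntegral.integral_hasDerivAt_right hint hmeas hr).const_sub
    (∫ s in Ioi a, g s)).congr_of_eventuallyEq hsplit.symm

theorem integrableOn_Ioi_inv_of_mul_sq_le {g : ℝ → ℝ} {r c : ℝ} (hr : 0 < r) (hc : 0 < c)
    (hg : ContinuousOn g (Ioi r)) (hle : ∀ s ∈ Ioi r, c * s ^ 2 ≤ g s) :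
    IntegrableOn (fun s => (g s)⁻¹) (Ioi r) := by
  have hpos : ∀ s ∈ Ioi r, 0 < c * s ^ 2 := fun s hs =>
    mul_pos hc (pow_pos (hr.trans hs) 2)
  refine Integrable.mono'
    ((integrableOn_Ioi_rpow_of_lt (by norm_num : (-2 : ℝ) < -1) hr).const_mul c⁻¹)
    ((hg.inv₀ fun s hs => ((hpos s hs).trans_le (hle s hs)).ne').aestronglyMeasurable
      measurableSet_Ioi) ?_
  refine (ae_restrict_iff' measurableSet_Ioi).2 (ae_of_all _ fun s hs => ?_)
  have hgpos : 0 < g s := (hpos s hs).trans_le (hle s hs)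
  calc ‖(g s)⁻¹‖ = (g s)⁻¹ := by rw [Real.norm_eq_abs, abs_of_pos (inv_pos.2 hgpos)]
    _ ≤ (c * s ^ 2)⁻¹ := inv_anti₀ (hpos s hs) (hle s hs)
    _ = c⁻¹ * s ^ (-2 : ℝ) := by
      rw [Real.rpow_neg (hr.trans hs).le, mul_inv, Real.rpow_two]

theorem div_mul_add_le_inv {r μ c : ℝ} (hr : 0 ≤ r) (hμ : 0 < μ) (hc : 0 ≤ c) :
    r / (μ * r + c) ≤ μ⁻¹ := by
  refine div_le_of_le_mul₀ (by positivity) (inv_nonneg.2 hμ.le) ?_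
  rw [mul_add, inv_mul_cancel_left₀ hμ.ne']
  exact le_add_of_nonneg_right (mul_nonneg (inv_nonneg.2 hμ.le) hc)

noncomputable def sadsLapse (M Λ r : ℝ) : ℝ := 1 - 2 * M / r - Λ * r ^ 2 / 3

noncomputable def tortoise (M Λ r : ℝ) : ℝ := -∫ s in Ioi r, (sadsLapse M Λ s)⁻¹

section

variable {M Λ rh s : ℝ}

theorem sadsLapse_eq_mul_sub (hrh : 0 < rh) (hroot : sadsLapse M Λ rh = 0) (hs : 0 < s) :
    sadsLapse M Λ s = (s - rh) * (2 * M / (s * rh) - Λ * (s + rh) / 3) := by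
  unfold sadsLapse at *
  field_simp at hroot ⊢
  linear_combination s * hroot

theorem sadsLapse_ge (hM : 0 ≤ M) (hrh : 0 < rh) (hroot : sadsLapse M Λ rh = 0) (hs : rh ≤ s) :
    -Λ * (s ^ 2 - rh ^ 2) / 3 ≤ sadsLapse M Λ s := by
  have hs0 : 0 < s := hrh.trans_le hs
  rw [sadsLapse_eq_mul_sub hrh hroot hs0]
  have : 0 ≤ (s - rh) * (2 * M / (s * rh)) := mul_nonneg (by linarith) (by positivity)
  linarith

theorem sadsLapse_pos (hM : 0 ≤ M) (hΛ : Λ < 0) (hrh : 0 < rh) (hroot : sadsLapse M Λ rh = 0)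
    (hs : rh < s) : 0 < sadsLapse M Λ s := by
  refine lt_of_lt_of_le ?_ (sadsLapse_ge hM hrh hroot hs.le)
  have : 0 < s ^ 2 - rh ^ 2 := by nlinarith
  nlinarith

theorem continuousOn_sadsLapse : ContinuousOn (sadsLapse M Λ) (Ioi 0) := by
  unfold sadsLapse
  exact (continuousOn_const.sub (continuousOn_const.div continuousOn_id
    fun _ hx => ne_of_gt hx)).sub (by fun_prop)

theorem integrableOn_Ioi_inv_sadsLapse (hM : 0 ≤ M) (hΛ : Λ < 0) (hrh : 0 < rh)
    (hroot : sadsLapse M Λ rh = 0) {r : ℝ} (hr : rh < r) :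
    IntegrableOn (fun s => (sadsLapse M Λ s)⁻¹) (Ioi r) := by
  have hr0 : 0 < r := hrh.trans hr
  refine integrableOn_Ioi_inv_of_mul_sq_le hr0 (c := -Λ * (r ^ 2 - rh ^ 2) / (3 * r ^ 2))
    (div_pos (mul_pos (neg_pos.2 hΛ) (by nlinarith)) (by positivity))
    (continuousOn_sadsLapse.mono (Ioi_subset_Ioi hr0.le)) fun s (hs : r < s) => ?_
  refine le_trans ?_ (sadsLapse_ge hM hrh hroot (hr.trans hs).le)
  -- `s ^ 2 - rh ^ 2 ≥ (1 - rh ^ 2 / r ^ 2) s ^ 2` because `r ≤ s`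
  rw [div_mul_eq_mul_div, div_le_div_iff₀ (by positivity) (by norm_num)]
  have : r ^ 2 ≤ s ^ 2 := by nlinarith
  nlinarith [mul_le_mul_of_nonneg_left this (sq_nonneg rh)]

theorem hasDerivAt_tortoise (hM : 0 ≤ M) (hΛ : Λ < 0) (hrh : 0 < rh)
    (hroot : sadsLapse M Λ rh = 0) {r : ℝ} (hr : rh < r) :
    HasDerivAt (tortoise M Λ) (sadsLapse M Λ r)⁻¹ r := by
  have hmid : rh < (rh + r) / 2 := by linarith
  have hcont : ContinuousAt (fun s => (sadsLapse M Λ s)⁻¹) r :=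
    (continuousOn_sadsLapse.continuousAt (Ioi_mem_nhds (hrh.trans hr))).inv₀
      (sadsLapse_pos hM hΛ hrh hroot hr).ne'
  have h := (hasDerivAt_integral_Ioi (by linarith)
    (integrableOn_Ioi_inv_sadsLapse hM hΛ hrh hroot hmid) hcont).neg
  rw [neg_neg] at h
  exact h

theorem strictMonoOn_tortoise (hM : 0 ≤ M) (hΛ : Λ < 0) (hrh : 0 < rh)
    (hroot : sadsLapse M Λ rh = 0) : StrictMonoOn (tortoise M Λ) (Ioi rh) := by
  refine strictMonoOn_of_hasDerivWithinAt_pos (convex_Ioi rh)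
    (f' := fun r => (sadsLapse M Λ r)⁻¹)
    (fun r hr => (hasDerivAt_tortoise hM hΛ hrh hroot hr).continuousAt.continuousWithinAt)
    (fun r hr => ?_) fun r hr => ?_ <;> rw [interior_Ioi] at hr
  · exact (hasDerivAt_tortoise hM hΛ hrh hroot hr).hasDerivWithinAt
  · exact inv_pos.2 (sadsLapse_pos hM hΛ hrh hroot hr)

theorem tortoise_nonpos (hM : 0 ≤ M) (hΛ : Λ < 0) (hrh : 0 < rh)
    (hroot : sadsLapse M Λ rh = 0) {r : ℝ} (hr : rh ≤ r) : tortoise M Λ r ≤ 0 :=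
  neg_nonpos.2 <| setIntegral_nonneg measurableSet_Ioi fun _ hs =>
    (inv_pos.2 (sadsLapse_pos hM hΛ hrh hroot (hr.trans_lt hs))).le

theorem integrableOn_exp_mul_tortoise_div_sadsLapse (hM : 0 ≤ M) (hΛ : Λ < 0) (hrh : 0 < rh)
    (hroot : sadsLapse M Λ rh = 0) {a : ℝ} (ha : 0 < a) :
    IntegrableOn (fun r => Real.exp (a * tortoise M Λ r) / sadsLapse M Λ r) (Ioi rh) := by
  have himage : tortoise M Λ '' Ioi rh ⊆ Iic 0 := by
    rintro _ ⟨r, hr, rfl⟩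
    exact tortoise_nonpos hM hΛ hrh hroot (le_of_lt hr)
  have := (integrableOn_image_iff_integrableOn_abs_deriv_smul measurableSet_Ioi
    (fun r hr => (hasDerivAt_tortoise hM hΛ hrh hroot hr).hasDerivWithinAt)
    (strictMonoOn_tortoise hM hΛ hrh hroot).injOn (fun x => Real.exp (a * x))).1
    ((integrableOn_exp_mul_Iic ha 0).mono_set himage)
  refine this.congr_fun (fun r hr => ?_) measurableSet_Ioi
  dsimp only
  rw [smul_eq_mul, abs_of_pos (inv_pos.2 (sadsLapse_pos hM hΛ hrh hroot hr)), inv_mul_eq_div]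

theorem integrableOn_sq_mode_div_sadsLapse (hM : 0 ≤ M) (hΛ : Λ < 0) (hrh : 0 < rh)
    (hroot : sadsLapse M Λ rh = 0) {μ c w : ℝ} (hμ : 0 < μ) (hc : 0 ≤ c) (hw : 0 < w) :
    IntegrableOn
      (fun r => (r * Real.exp (w * tortoise M Λ r) / (μ * r + c)) ^ 2 / sadsLapse M Λ r)
      (Ioi rh) := by
  have hmode : ContinuousOn (fun r : ℝ => (r / (μ * r + c)) ^ 2) (Ioi rh) :=
    ((continuousOn_id.div (by fun_prop) fun r hr => by
      have : 0 < r := hrh.trans hr; positivity)).pow 2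
  have hbound : ∀ᵐ r ∂volume.restrict (Ioi rh), ‖(r / (μ * r + c)) ^ 2‖ ≤ μ⁻¹ ^ 2 := by
    refine (ae_restrict_iff' measurableSet_Ioi).2 (ae_of_all _ fun r hr => ?_)
    have hr0 : 0 ≤ r := (hrh.trans hr).le
    rw [Real.norm_eq_abs, abs_of_nonneg (by positivity)]
    exact pow_le_pow_left₀ (by positivity) (div_mul_add_le_inv hr0 hμ hc) 2
  have hexp := integrableOn_exp_mul_tortoise_div_sadsLapse hM hΛ hrh hroot (mul_pos two_pos hw)
  refine IntegrableOn.congr_fun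
    (hexp.bdd_mul (hmode.aestronglyMeasurable measurableSet_Ioi) hbound) (fun r _ => ?_)
    measurableSet_Ioi
  rw [mul_assoc, two_mul, Real.exp_add]
  ring

end

theorem stmt_14_general (M Λ : ℝ) (hM : 0 < M) (hΛ : Λ < 0) (ℓ : ℕ) (hℓ : 2 ≤ ℓ)
    (rh : ℝ) (hrh : 0 < rh)
    (hroot : 1 - 2 * M / rh - Λ * rh ^ 2 / 3 = 0) :
    let μ : ℝ := ((ℓ : ℝ) - 1) * ((ℓ : ℝ) + 2)
    let w : ℝ := ((ℓ : ℝ) - 1) * (ℓ : ℝ) * ((ℓ : ℝ) + 1) * ((ℓ : ℝ) + 2) / (12 * M)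
    let f : ℝ → ℝ := fun r => 1 - 2 * M / r - Λ * r ^ 2 / 3
    let rstar : ℝ → ℝ := fun r => -∫ s in Set.Ioi r, (f s)⁻¹
    (∀ r : ℝ, rh < r → IntegrableOn (fun s : ℝ => (f s)⁻¹) (Set.Ioi r)) ∧
    IntegrableOn
      (fun r : ℝ => (r * Real.exp (w * rstar r) / (μ * r + 6 * M)) ^ 2 / f r)
      (Set.Ioi rh) := by
  intro μ w f rstar
  have hℓ' : (2 : ℝ) ≤ ℓ := by exact_mod_cast hℓ
  have hℓ₁ : (0 : ℝ) < ℓ - 1 := by linarith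
  have hμ : 0 < μ := mul_pos hℓ₁ (by linarith)
  have hw : 0 < w :=
    div_pos (mul_pos (mul_pos (mul_pos hℓ₁ (by linarith)) (by linarith)) (by linarith))
      (by linarith)
  exact ⟨fun r hr => integrableOn_Ioi_inv_sadsLapse hM.le hΛ hrh hroot hr,
    integrableOn_sq_mode_div_sadsLapse hM.le hΛ hrh hroot hμ (by linarith) hw⟩

/-- For Schwarzschild-anti de Sitter (`M > 0`, `Λ < 0`) the Chandrasekhar mode
`χ⁺(r) = r e^{w r*(r)}/(μr + 6M)` is square integrable with respect to the
tortoise measure `dr* = dr/f` on the static region `r > r_h`; i.e.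
`∫_{r_h}^∞ (χ⁺)²/f dr < ∞`. The improper integral defining
`r*(r) = -∫_r^∞ ds/f(s)` converges for `r > r_h`. -/
theorem stmt_14 (M Λ : ℝ) (hM : 0 < M) (hΛ : Λ < 0) (ℓ : ℕ) (hℓ : 2 ≤ ℓ)
    (rh : ℝ) (hrh : 0 < rh)
    (hroot : 1 - 2 * M / rh - Λ * rh ^ 2 / 3 = 0)
    (huniq : ∀ r : ℝ, 0 < r → 1 - 2 * M / r - Λ * r ^ 2 / 3 = 0 → r = rh) :
    let μ : ℝ := ((ℓ : ℝ) - 1) * ((ℓ : ℝ) + 2)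
    let w : ℝ := ((ℓ : ℝ) - 1) * (ℓ : ℝ) * ((ℓ : ℝ) + 1) * ((ℓ : ℝ) + 2) / (12 * M)
    let f : ℝ → ℝ := fun r => 1 - 2 * M / r - Λ * r ^ 2 / 3
    let rstar : ℝ → ℝ := fun r => -∫ s in Set.Ioi r, (f s)⁻¹
    (∀ r : ℝ, rh < r → IntegrableOn (fun s : ℝ => (f s)⁻¹) (Set.Ioi r)) ∧
    IntegrableOn
      (fun r : ℝ => (r * Real.exp (w * rstar r) / (μ * r + 6 * M)) ^ 2 / f r)
      (Set.Ioi rh) :=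
  stmt_14_general M Λ hM hΛ ℓ hℓ rh hrh hroot
end

section
/- Let M > 0, Λ ∈ ℝ, ℓ ≥ 2 an integer, and suppose r_h > 0 satisfies f(r_h) = 0 and f'(r_h) > 0, with f > 0 and μr + 6M > 0 on (r_h, r₀) for some r₀ > r_h. Let φ : ℝ × (r_h, r₀) → ℝ be C², satisfying on ℝ × (r_h, r₀) both the Regge–Wheeler equation ∂_t²φ − f∂_r(f∂_rφ) + f·(ℓ(ℓ+1)/r² − 6M/r³)·φ = 0 and the first-order equation f∂_rφ + Wφ = 0, and suppose that for each t the integral ∫_{r_h}^{r₀} φ(t, r)²/f(r) dr is finite. Then φ is identically zero. -/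
/-! The first-order equation `f ∂_r φ = -W φ` with `W ≥ 0` makes `φ(t, ·)²` nonincreasing on
`(r_h, r₀)`, so a slice that is nonzero at some `r₁` satisfies `φ² ≥ φ(t, r₁)² > 0` on `(r_h, r₁)`.
Since `f` is differentiable with `f(r_h) = 0`, `f(r) = O(r - r_h)`, so `φ²/f` dominates a multiple
of `(r - r_h)⁻¹`, which is not integrable at `r_h`. -/

open MeasureTheory

open Set Filter Topology Asymptotics

theorem antitoneOn_sq_of_mul_deriv_nonpos {g : ℝ → ℝ} {s : Set ℝ} (hs : Convex ℝ s)
    (hcont : ContinuousOn g s) (hdiff : DifferentiableOn ℝ g (interior s))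
    (hsign : ∀ x ∈ interior s, g x * deriv g x ≤ 0) :
    AntitoneOn (fun x => g x ^ 2) s := by
  refine antitoneOn_of_deriv_nonpos hs (hcont.pow 2) (hdiff.pow 2) fun x hx => ?_
  have hg := ((hdiff x hx).differentiableAt (isOpen_interior.mem_nhds hx)).hasDerivAt
  rw [(hg.fun_pow 2).deriv]
  norm_num
  linarith [hsign x hx]

theorem antitoneOn_sq_of_mul_deriv_add_mul_eq_zero {f W g : ℝ → ℝ} {a b : ℝ}
    (hg : DifferentiableOn ℝ g (Ioo a b)) (hf : ∀ x ∈ Ioo a b, 0 < f x)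
    (hW : ∀ x ∈ Ioo a b, 0 ≤ W x) (hD : ∀ x ∈ Ioo a b, f x * deriv g x + W x * g x = 0) :
    AntitoneOn (fun x => g x ^ 2) (Ioo a b) := by
  refine antitoneOn_sq_of_mul_deriv_nonpos (convex_Ioo a b) hg.continuousOn
    (by rwa [interior_Ioo]) fun x hx => ?_
  rw [interior_Ioo] at hx
  have hfg : f x * (g x * deriv g x) = -(W x * g x ^ 2) := by
    linear_combination g x * hD x hx
  have := hW x hx
  exact nonpos_of_mul_nonpos_right (hfg ▸ neg_nonpos.2 (by positivity)) (hf x hx)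

theorem not_integrableOn_Ioo_of_sub_inv_isBigO {g : ℝ → ℝ} {a b : ℝ} (hab : a < b)
    (hg : (fun x => (x - a)⁻¹) =O[𝓝[>] a] g) : ¬IntegrableOn g (Ioo a b) := by
  have hlog : ∀ᶠ x in 𝓝[>] a, HasDerivAt (fun x => Real.log (x - a)) (x - a)⁻¹ x := by
    filter_upwards [self_mem_nhdsWithin] with x hx
    simpa using ((hasDerivAt_id x).sub_const a).log (sub_pos.2 hx).ne'
  have hblow : Tendsto (fun x => ‖Real.log (x - a)‖) (𝓝[>] a) atTop := by
    refine tendsto_abs_atBot_atTop.comp (Real.tendsto_log_nhdsGT_zero.comp ?_)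
    refine tendsto_nhdsWithin_of_tendsto_nhds_of_eventually_within _ ?_ ?_
    · simpa using (continuous_sub_right a).continuousWithinAt.tendsto (s := Ioi a) (x := a)
    · filter_upwards [self_mem_nhdsWithin] with x hx using sub_pos.2 (mem_Ioi.1 hx)
  exact not_integrableOn_of_tendsto_norm_atTop_of_deriv_isBigO_filter (𝓝[>] a)
    (Ioo_mem_nhdsGT hab) (hlog.mono fun x hx => hx.differentiableAt) hblow
    (hg.congr' (hlog.mono fun x hx => hx.deriv.symm) EventuallyEq.rfl)

theorem sub_inv_isBigO_inv_of_differentiableAt {f : ℝ → ℝ} {a : ℝ} {l : Filter ℝ}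
    (hf : DifferentiableAt ℝ f a) (ha : f a = 0) (hl : l ≤ 𝓝 a) (hne : ∀ᶠ x in l, f x ≠ 0) :
    (fun x => (x - a)⁻¹) =O[l] fun x => (f x)⁻¹ := by
  have := (hf.isBigO_sub.mono hl).inv_rev (hne.mono fun x hx h => absurd (by simpa [ha] using h) hx)
  simpa [ha] using this

theorem inv_isBigO_div_of_le {f g : ℝ → ℝ} {l : Filter ℝ} {c : ℝ} (hc : 0 < c)
    (hf : ∀ᶠ x in l, 0 < f x) (hg : ∀ᶠ x in l, c ≤ g x) :
    (fun x => (f x)⁻¹) =O[l] fun x => g x / f x := by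
  refine IsBigO.of_bound c⁻¹ ?_
  filter_upwards [hf, hg] with x hfx hgx
  rw [Real.norm_of_nonneg (by positivity), Real.norm_of_nonneg (div_nonneg (hc.le.trans hgx) hfx.le),
    ← mul_div_assoc, le_div_iff₀ hfx, inv_mul_cancel₀ hfx.ne', one_le_inv_mul₀ hc]
  exact hgx

theorem natCast_sub_one_mul_self_nonneg (n : ℕ) : 0 ≤ ((n : ℝ) - 1) * n := by
  rcases n.eq_zero_or_pos with rfl | hn
  · simp
  · have : (1 : ℝ) ≤ n := by exact_mod_cast hn
    exact mul_nonneg (by linarith) (by linarith)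

theorem stmt_15_general (M Λ : ℝ) (hM : 0 < M) (ℓ : ℕ) (rh r0 : ℝ)
    (hrh : 0 < rh)
    (hroot : 1 - 2 * M / rh - Λ * rh ^ 2 / 3 = 0) :
    let μ : ℝ := ((ℓ : ℝ) - 1) * ((ℓ : ℝ) + 2)
    let w : ℝ := ((ℓ : ℝ) - 1) * (ℓ : ℝ) * ((ℓ : ℝ) + 1) * ((ℓ : ℝ) + 2) / (12 * M)
    let f : ℝ → ℝ := fun r => 1 - 2 * M / r - Λ * r ^ 2 / 3
    let W : ℝ → ℝ := fun r => w + 6 * M * f r / (r * (μ * r + 6 * M))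
    let VRW : ℝ → ℝ := fun r => (ℓ : ℝ) * ((ℓ : ℝ) + 1) / r ^ 2 - 6 * M / r ^ 3
    (∀ r ∈ Set.Ioo rh r0, 0 < f r) →
    (∀ r ∈ Set.Ioo rh r0, 0 < μ * r + 6 * M) →
    ∀ φ : ℝ → ℝ → ℝ,
      ContDiffOn ℝ 2 (fun p : ℝ × ℝ => φ p.1 p.2) (Set.univ ×ˢ Set.Ioo rh r0) →
      (∀ t : ℝ, ∀ r ∈ Set.Ioo rh r0, waveOp f VRW φ t r = 0) →
      (∀ t : ℝ, ∀ r ∈ Set.Ioo rh r0,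
        f r * deriv (fun s => φ t s) r + W r * φ t r = 0) →
      (∀ t : ℝ, IntegrableOn (fun r => (φ t r) ^ 2 / f r) (Set.Ioo rh r0)) →
      ∀ t : ℝ, ∀ r ∈ Set.Ioo rh r0, φ t r = 0 := by
  intro μ w f W VRW hf hμ φ hφ _ hD hL2 t r₁ hr₁
  by_contra hne
  have hslice : DifferentiableOn ℝ (φ t) (Ioo rh r0) :=
    (hφ.comp (contDiff_const.prodMk contDiff_id).contDiffOn fun r hr => ⟨mem_univ _, hr⟩)
      |>.differentiableOn two_ne_zero
  have hW : ∀ r ∈ Ioo rh r0, 0 ≤ W r := fun r hr => by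
    have := natCast_sub_one_mul_self_nonneg ℓ
    have := hf r hr
    have := hμ r hr
    have : 0 < r := hrh.trans hr.1
    positivity
  have hanti : AntitoneOn (fun r => φ t r ^ 2) (Ioo rh r0) :=
    antitoneOn_sq_of_mul_deriv_add_mul_eq_zero hslice hf hW (hD t)
  have hfrh : DifferentiableAt ℝ f rh := by fun_prop (disch := exact hrh.ne')
  have hIoo : Ioo rh r₁ ∈ 𝓝[>] rh := Ioo_mem_nhdsGT hr₁.1
  have hr₁r0 : Ioo rh r₁ ⊆ Ioo rh r0 := Ioo_subset_Ioo_right hr₁.2.le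
  have hf₁ : ∀ᶠ r in 𝓝[>] rh, 0 < f r := eventually_of_mem hIoo fun r hr => hf r (hr₁r0 hr)
  have hinv : (fun r => (r - rh)⁻¹) =O[𝓝[>] rh] fun r => (f r)⁻¹ :=
    sub_inv_isBigO_inv_of_differentiableAt hfrh hroot nhdsWithin_le_nhds (hf₁.mono fun r => ne_of_gt)
  have hbound : (fun r => (f r)⁻¹) =O[𝓝[>] rh] fun r => φ t r ^ 2 / f r :=
    inv_isBigO_div_of_le (by positivity) hf₁
      (eventually_of_mem hIoo fun r hr => hanti (hr₁r0 hr) hr₁ hr.2.le)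
  exact not_integrableOn_Ioo_of_sub_inv_isBigO hr₁.1 (hinv.trans hbound)
    ((hL2 t).mono_set hr₁r0)

/-- Injectivity of the Chandrasekhar operator `D⁺ = f∂_r + W` on Regge-Wheeler
solutions with time slices that are `L²` with respect to the tortoise measure
`dr/f` near a simple horizon (`f(r_h) = 0`, `f'(r_h) > 0`): such a solution
annihilated by `D⁺` vanishes identically. -/
theorem stmt_15 (M Λ : ℝ) (hM : 0 < M) (ℓ : ℕ) (hℓ : 2 ≤ ℓ) (rh r0 : ℝ)
    (hrh : 0 < rh) (hr0 : rh < r0)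
    (hroot : 1 - 2 * M / rh - Λ * rh ^ 2 / 3 = 0)
    (hder : 0 < deriv (fun r : ℝ => 1 - 2 * M / r - Λ * r ^ 2 / 3) rh) :
    let μ : ℝ := ((ℓ : ℝ) - 1) * ((ℓ : ℝ) + 2)
    let w : ℝ := ((ℓ : ℝ) - 1) * (ℓ : ℝ) * ((ℓ : ℝ) + 1) * ((ℓ : ℝ) + 2) / (12 * M)
    let f : ℝ → ℝ := fun r => 1 - 2 * M / r - Λ * r ^ 2 / 3
    let W : ℝ → ℝ := fun r => w + 6 * M * f r / (r * (μ * r + 6 * M))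
    let VRW : ℝ → ℝ := fun r => (ℓ : ℝ) * ((ℓ : ℝ) + 1) / r ^ 2 - 6 * M / r ^ 3
    (∀ r ∈ Set.Ioo rh r0, 0 < f r) →
    (∀ r ∈ Set.Ioo rh r0, 0 < μ * r + 6 * M) →
    ∀ φ : ℝ → ℝ → ℝ,
      ContDiffOn ℝ 2 (fun p : ℝ × ℝ => φ p.1 p.2) (Set.univ ×ˢ Set.Ioo rh r0) →
      (∀ t : ℝ, ∀ r ∈ Set.Ioo rh r0, waveOp f VRW φ t r = 0) →
      (∀ t : ℝ, ∀ r ∈ Set.Ioo rh r0,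
        f r * deriv (fun s => φ t s) r + W r * φ t r = 0) →
      (∀ t : ℝ, IntegrableOn (fun r => (φ t r) ^ 2 / f r) (Set.Ioo rh r0)) →
      ∀ t : ℝ, ∀ r ∈ Set.Ioo rh r0, φ t r = 0 :=
  stmt_15_general M Λ hM ℓ rh r0 hrh hroot
end

section
/- Let M > 0, Λ ∈ ℝ, ℓ ≥ 2 an integer, and let I ⊆ (0, ∞) be an open interval on which f > 0 and μr + 6M > 0. Set Z(r) = (2MΛr³ + μr(r − 3M) − 6M²)/(r²(μr + 6M)). Then χ₀(r) = √(f(r))/(μr + 6M) satisfies f(r)·χ₀'(r) + Z(r)·χ₀(r) = 0 on I, and every differentiable function χ : I → ℝ satisfying f·χ' + Z·χ = 0 on I is a constant multiple of χ₀. -/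
/-!
Writing `f' = 2M/r² − 2Λr/3`, a direct computation gives `Z = f μ/(μr + 6M) − f'/2`, i.e.
`Z = −f (log χ₀)'`, so `χ₀` lies in the kernel of `f∂_r + Z`. Where `f ≠ 0` this is a first-order
linear equation, so for any two solutions `χ, χ₀` with `χ₀ ≠ 0` the quotient `χ/χ₀` has vanishing
derivative (its Wronskian vanishes) and is therefore constant on the interval.
-/

open Set

theorem hasDerivAt_div_eq_zero_of_linear_ode {u v : ℝ → ℝ} {p q du dv r : ℝ}
    (hu : HasDerivAt u du r) (hv : HasDerivAt v dv r) (hp : p ≠ 0) (hvr : v r ≠ 0)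
    (hu_ode : p * du + q * u r = 0) (hv_ode : p * dv + q * v r = 0) :
    HasDerivAt (fun x => u x / v x) 0 r := by
  have hwronskian : du * v r - u r * dv = 0 := by
    have : p * (du * v r - u r * dv) = 0 := by linear_combination v r * hu_ode - u r * hv_ode
    exact (mul_eq_zero.mp this).resolve_left hp
  simpa [hwronskian] using hu.fun_div hv hvr

theorem IsOpen.exists_eq_const_mul_of_linear_ode {s : Set ℝ} (hs : IsOpen s)
    (hs' : IsPreconnected s) {p q u v : ℝ → ℝ}
    (hp : ∀ r ∈ s, p r ≠ 0) (hv_ne : ∀ r ∈ s, v r ≠ 0)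
    (hu : ∀ r ∈ s, ∃ d, HasDerivAt u d r ∧ p r * d + q r * u r = 0)
    (hv : ∀ r ∈ s, ∃ d, HasDerivAt v d r ∧ p r * d + q r * v r = 0) :
    ∃ c, ∀ r ∈ s, u r = c * v r := by
  have hquot : ∀ r ∈ s, HasDerivAt (fun x => u x / v x) 0 r := fun r hr => by
    obtain ⟨du, hdu, hu_ode⟩ := hu r hr
    obtain ⟨dv, hdv, hv_ode⟩ := hv r hr
    exact hasDerivAt_div_eq_zero_of_linear_ode hdu hdv (hp r hr) (hv_ne r hr) hu_ode hv_ode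
  obtain ⟨c, hc⟩ := hs.exists_is_const_of_deriv_eq_zero hs'
    (fun r hr => (hquot r hr).differentiableAt.differentiableWithinAt)
    (fun r hr => (hquot r hr).deriv)
  exact ⟨c, fun r hr => (div_eq_iff (hv_ne r hr)).mp (hc r hr)⟩

theorem HasDerivAt.sqrt_div {f D : ℝ → ℝ} {f' D' r : ℝ} (hf : HasDerivAt f f' r)
    (hD : HasDerivAt D D' r) (hfr : 0 < f r) (hDr : D r ≠ 0) :
    HasDerivAt (fun x => √(f x) / D x) (√(f r) / D r * (f' / (2 * f r) - D' / D r)) r := by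
  have hsqrt : √(f r) ^ 2 = f r := Real.sq_sqrt hfr.le
  refine ((hf.sqrt hfr.ne').fun_div hD hDr).congr_deriv ?_
  field_simp
  rw [hsqrt]
  ring

namespace SchwarzschildDeSitter

variable (M Λ μ : ℝ)

noncomputable def f (r : ℝ) : ℝ := 1 - 2 * M / r - Λ * r ^ 2 / 3

noncomputable def Z (r : ℝ) : ℝ :=
  (2 * M * Λ * r ^ 3 + μ * r * (r - 3 * M) - 6 * M ^ 2) / (r ^ 2 * (μ * r + 6 * M))

noncomputable def χ₀ (r : ℝ) : ℝ := √(f M Λ r) / (μ * r + 6 * M)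

variable {M Λ μ}

theorem hasDerivAt_f {r : ℝ} (hr : r ≠ 0) :
    HasDerivAt (f M Λ) (2 * M / r ^ 2 - 2 * Λ * r / 3) r := by
  have hinv : HasDerivAt (fun x : ℝ => 2 * M / x) (-(2 * M) / r ^ 2) r := by
    simpa [div_eq_mul_inv, neg_div] using (hasDerivAt_inv hr).const_mul (2 * M)
  have hsq : HasDerivAt (fun x : ℝ => Λ * x ^ 2 / 3) (Λ * (2 * r) / 3) r := by
    simpa using ((hasDerivAt_pow 2 r).const_mul Λ).div_const 3
  exact (((hasDerivAt_const r 1).sub hinv).sub hsq).congr_deriv (by ring)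

theorem Z_eq {r : ℝ} (hr : r ≠ 0) (hD : μ * r + 6 * M ≠ 0) :
    Z M Λ μ r = f M Λ r * μ / (μ * r + 6 * M) - (2 * M / r ^ 2 - 2 * Λ * r / 3) / 2 := by
  have hD' : r * μ + M * 6 ≠ 0 := fun h => hD (by linear_combination h)
  unfold Z f
  field_simp
  ring

theorem χ₀_mem_kernel {r : ℝ} (hr : r ≠ 0) (hf : 0 < f M Λ r) (hD : μ * r + 6 * M ≠ 0) :
    ∃ d, HasDerivAt (χ₀ M Λ μ) d r ∧ f M Λ r * d + Z M Λ μ r * χ₀ M Λ μ r = 0 := by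
  have hDer : HasDerivAt (fun x => μ * x + 6 * M) μ r := by
    simpa using ((hasDerivAt_id r).const_mul μ).add_const (6 * M)
  refine ⟨_, (hasDerivAt_f hr).sqrt_div hDer hf hD, ?_⟩
  have hD' : r * μ + M * 6 ≠ 0 := fun h => hD (by linear_combination h)
  rw [Z_eq hr hD, χ₀]
  field_simp
  ring

end SchwarzschildDeSitter

theorem stmt_16_general (M Λ : ℝ) (ℓ : ℕ) (a b : ℝ)
    (hI : Set.Ioo a b ⊆ Set.Ioi (0 : ℝ)) :
    let μ : ℝ := ((ℓ : ℝ) - 1) * ((ℓ : ℝ) + 2)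
    let f : ℝ → ℝ := fun r => 1 - 2 * M / r - Λ * r ^ 2 / 3
    let Z : ℝ → ℝ := fun r =>
      (2 * M * Λ * r ^ 3 + μ * r * (r - 3 * M) - 6 * M ^ 2)
        / (r ^ 2 * (μ * r + 6 * M))
    let χ₀ : ℝ → ℝ := fun r => Real.sqrt (f r) / (μ * r + 6 * M)
    (∀ r ∈ Set.Ioo a b, 0 < f r) →
    (∀ r ∈ Set.Ioo a b, 0 < μ * r + 6 * M) →
    (∀ r ∈ Set.Ioo a b, ∃ d : ℝ,
      HasDerivAt χ₀ d r ∧ f r * d + Z r * χ₀ r = 0) ∧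
    (∀ χ : ℝ → ℝ,
      (∀ r ∈ Set.Ioo a b, ∃ d : ℝ,
        HasDerivAt χ d r ∧ f r * d + Z r * χ r = 0) →
      ∃ c : ℝ, ∀ r ∈ Set.Ioo a b, χ r = c * χ₀ r) := by
  intro μ _ _ _ hf hD
  have hkernel (r) (hr : r ∈ Ioo a b) :=
    SchwarzschildDeSitter.χ₀_mem_kernel (hI hr).ne' (hf r hr) (hD r hr).ne'
  refine ⟨hkernel, fun χ hχ => isOpen_Ioo.exists_eq_const_mul_of_linear_ode isPreconnected_Ioo
    (fun r hr => (hf r hr).ne') (fun r hr => ?_) hχ hkernel⟩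
  exact (div_pos (Real.sqrt_pos.mpr (hf r hr)) (hD r hr)).ne'

/-- The kernel of the operator `f∂_r + Z` appearing in the gauge-invariant
scalar `G₊` is one dimensional, spanned by `χ₀ = √f/(μr + 6M)`: `χ₀` solves
`f χ₀' + Z χ₀ = 0`, and every differentiable solution on the interval is a
constant multiple of `χ₀`. -/
theorem stmt_16 (M Λ : ℝ) (hM : 0 < M) (ℓ : ℕ) (hℓ : 2 ≤ ℓ) (a b : ℝ)
    (hI : Set.Ioo a b ⊆ Set.Ioi (0 : ℝ)) :
    let μ : ℝ := ((ℓ : ℝ) - 1) * ((ℓ : ℝ) + 2)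
    let f : ℝ → ℝ := fun r => 1 - 2 * M / r - Λ * r ^ 2 / 3
    let Z : ℝ → ℝ := fun r =>
      (2 * M * Λ * r ^ 3 + μ * r * (r - 3 * M) - 6 * M ^ 2)
        / (r ^ 2 * (μ * r + 6 * M))
    let χ₀ : ℝ → ℝ := fun r => Real.sqrt (f r) / (μ * r + 6 * M)
    (∀ r ∈ Set.Ioo a b, 0 < f r) →
    (∀ r ∈ Set.Ioo a b, 0 < μ * r + 6 * M) →
    (∀ r ∈ Set.Ioo a b, ∃ d : ℝ,
      HasDerivAt χ₀ d r ∧ f r * d + Z r * χ₀ r = 0) ∧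
    (∀ χ : ℝ → ℝ,
      (∀ r ∈ Set.Ioo a b, ∃ d : ℝ,
        HasDerivAt χ d r ∧ f r * d + Z r * χ r = 0) →
      ∃ c : ℝ, ∀ r ∈ Set.Ioo a b, χ r = c * χ₀ r) :=
  stmt_16_general M Λ ℓ a b hI
end

section
/- Let M > 0, Λ ∈ ℝ, ℓ ≥ 2 an integer, and let I ⊆ (0, ∞) be a nondegenerate open interval on which f > 0 and μr + 6M > 0. Set Z(r) = (2MΛr³ + μr(r − 3M) − 6M²)/(r²(μr + 6M)). If χ : ℝ × I → ℝ is C² and satisfies on ℝ × I both the Zerilli equation ∂_t²χ − f∂_r(f∂_rχ) + f·V^Z·χ = 0 and the first-order equation f∂_rχ + Zχ = 0, then χ is identically zero. -/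
open Set Filter Topology Polynomial

theorem ContDiffOn.differentiableAt_snd_of_univ_prod {χ : ℝ → ℝ → ℝ} {U : Set ℝ}
    {n : WithTop ℕ∞} (hχ : ContDiffOn ℝ n (fun p : ℝ × ℝ => χ p.1 p.2) (univ ×ˢ U))
    (hn : n ≠ 0) (hU : IsOpen U) (t : ℝ) {r : ℝ} (hr : r ∈ U) :
    DifferentiableAt ℝ (χ t) r := by
  have hχ' : DifferentiableAt ℝ (fun p : ℝ × ℝ => χ p.1 p.2) (t, r) :=
    (hχ.contDiffAt ((isOpen_univ.prod hU).mem_nhds ⟨mem_univ t, hr⟩)).differentiableAt hn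
  exact hχ'.comp r ((differentiableAt_const t).prodMk differentiableAt_id)

theorem HasDerivAt.div_sqrt {P f : ℝ → ℝ} {P' f' r : ℝ} (hP : HasDerivAt P P' r)
    (hf : HasDerivAt f f' r) (hfr : 0 < f r) (hPr : P r ≠ 0) :
    HasDerivAt (fun x => P x / √(f x)) (P r / √(f r) * (f r * P' / P r - f' / 2) / f r) r := by
  refine (hP.div (hf.sqrt hfr.ne') (Real.sqrt_pos.2 hfr).ne').congr_deriv ?_
  have hq : √(f r) ^ 2 = f r := Real.sq_sqrt hfr.le
  have hq0 : √(f r) ≠ 0 := (Real.sqrt_pos.2 hfr).ne'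
  generalize √(f r) = q at hq hq0 ⊢
  rw [← hq]
  field_simp

theorem IsOpen.mul_eq_of_linear_ode {U : Set ℝ} (hU : IsOpen U) (hU' : IsPreconnected U)
    {f Z φ w : ℝ → ℝ} (hφ : ∀ x ∈ U, DifferentiableAt ℝ φ x)
    (hw : ∀ x ∈ U, HasDerivAt w (w x * Z x / f x) x) (hf : ∀ x ∈ U, f x ≠ 0)
    (hode : ∀ x ∈ U, f x * deriv φ x + Z x * φ x = 0) {x y : ℝ} (hx : x ∈ U) (hy : y ∈ U) :
    φ x * w x = φ y * w y := by
  have hderiv : ∀ z ∈ U, HasDerivAt (fun z => φ z * w z) 0 z := fun z hz => by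
    refine ((hφ z hz).hasDerivAt.mul (hw z hz)).congr_deriv ?_
    field_simp [hf z hz]
    linear_combination w z * hode z hz
  exact hU.is_const_of_deriv_eq_zero hU'
    (fun z hz => (hderiv z hz).differentiableAt.differentiableWithinAt)
    (fun z hz => (hderiv z hz).deriv) hx hy

theorem waveOp_eq_of_first_order {f Z V : ℝ → ℝ} {φ : ℝ → ℝ → ℝ} {t r : ℝ}
    (hZ : DifferentiableAt ℝ Z r) (hφ : DifferentiableAt ℝ (φ t) r)
    (hode : ∀ᶠ x in 𝓝 r, f x * deriv (φ t) x + Z x * φ t x = 0) :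
    waveOp f V φ t r = deriv (deriv fun t' => φ t' r) t
      - (Z r ^ 2 - f r * deriv Z r - f r * V r) * φ t r := by
  have hflux : (fun x => f x * deriv (φ t) x) =ᶠ[𝓝 r] fun x => -(Z x * φ t x) :=
    hode.mono fun x hx => by linear_combination hx
  have hflux' : deriv (fun x => f x * deriv (φ t) x) r
      = -(deriv Z r * φ t r + Z r * deriv (φ t) r) := by
    rw [hflux.deriv_eq]
    exact (hZ.hasDerivAt.mul hφ.hasDerivAt).neg.deriv
  unfold waveOp
  rw [hflux']
  linear_combination Z r * hode.self_of_nhds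

theorem deriv_deriv_mul_eq_of_mul_eq {φ : ℝ → ℝ → ℝ} {w : ℝ → ℝ} {r r₀ : ℝ} (hw : w r ≠ 0)
    (h : ∀ t, φ t r * w r = φ t r₀ * w r₀) (t : ℝ) :
    deriv (deriv fun t' => φ t' r) t * w r = deriv (deriv fun t' => φ t' r₀) t * w r₀ := by
  have hφ : (fun t' => φ t' r) = fun t' => φ t' r₀ * (w r₀ / w r) := by
    ext t'
    field_simp
    exact h t'
  rw [hφ, deriv_mul_const_field', deriv_mul_const_field]
  field_simp

noncomputable section

def sdsLapse (M Λ r : ℝ) : ℝ := 1 - 2 * M / r - Λ * r ^ 2 / 3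

def zerilliZ (M Λ μ r : ℝ) : ℝ :=
  (2 * M * Λ * r ^ 3 + μ * r * (r - 3 * M) - 6 * M ^ 2) / (r ^ 2 * (μ * r + 6 * M))

def zerilliV (M Λ μ ℓ r : ℝ) : ℝ :=
  ((μ ^ 2 * ℓ * (ℓ + 1) - 24 * M ^ 2 * Λ) * r ^ 3
      + 6 * μ ^ 2 * M * r ^ 2 + 36 * μ * M ^ 2 * r + 72 * M ^ 3)
    / (r ^ 3 * (μ * r + 6 * M) ^ 2)

def zerilliReducedCoeff (M Λ μ ℓ r : ℝ) : ℝ :=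
  zerilliZ M Λ μ r ^ 2 - sdsLapse M Λ r * deriv (zerilliZ M Λ μ) r
    - sdsLapse M Λ r * zerilliV M Λ μ ℓ r

def zerilliZNum (M Λ μ : ℝ) : ℝ[X] :=
  C (2 * M * Λ) * X ^ 3 + C μ * X * (X - C (3 * M)) - C (6 * M ^ 2)

def zerilliZDen (M μ : ℝ) : ℝ[X] := X ^ 2 * (C μ * X + C (6 * M))

/-- `3r⁴(μr + 6M)² · zerilliReducedCoeff`, written with `fN = 3r f` and `vN = r³(μr + 6M)² V`. -/
def zerilliReducedNum (M Λ μ ℓ : ℝ) : ℝ[X] :=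
  let P := C μ * X + C (6 * M)
  let fN := C 3 * X - C (6 * M) - C Λ * X ^ 3
  let vN := C (μ ^ 2 * ℓ * (ℓ + 1) - 24 * M ^ 2 * Λ) * X ^ 3 + C (6 * μ ^ 2 * M) * X ^ 2
    + C (36 * μ * M ^ 2) * X + C (72 * M ^ 3)
  let zN := zerilliZNum M Λ μ
  3 * zN ^ 2 - fN * (derivative zN * X * P - zN * (2 * P + C μ * X)) - fN * vN

end

section Zerilli

variable {M Λ μ ℓ r : ℝ}

theorem hasDerivAt_sdsLapse (M Λ : ℝ) (hr : r ≠ 0) :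
    HasDerivAt (sdsLapse M Λ) (2 * M / r ^ 2 - 2 * Λ * r / 3) r := by
  have h := ((hasDerivAt_inv hr).const_mul (2 * M)).const_sub 1
    |>.sub (((hasDerivAt_pow 2 r).const_mul Λ).div_const 3)
  refine h.congr_deriv ?_
  field_simp
  ring

theorem zerilliZ_eq (hr : r ≠ 0) (hP : μ * r + 6 * M ≠ 0) :
    zerilliZ M Λ μ r
      = sdsLapse M Λ r * μ / (μ * r + 6 * M) - (2 * M / r ^ 2 - 2 * Λ * r / 3) / 2 := by
  have hP' : r * μ + M * 6 ≠ 0 := by convert hP using 1; ring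
  unfold zerilliZ sdsLapse
  field_simp
  ring

theorem hasDerivAt_zerilliIntegratingFactor (hr : r ≠ 0) (hP : μ * r + 6 * M ≠ 0)
    (hf : 0 < sdsLapse M Λ r) :
    HasDerivAt (fun x => (μ * x + 6 * M) / √(sdsLapse M Λ x))
      ((μ * r + 6 * M) / √(sdsLapse M Λ r) * zerilliZ M Λ μ r / sdsLapse M Λ r) r := by
  have hPd : HasDerivAt (fun x => μ * x + 6 * M) μ r := by
    simpa using ((hasDerivAt_id r).const_mul μ).add_const (6 * M)
  rw [zerilliZ_eq hr hP]
  exact HasDerivAt.div_sqrt hPd (hasDerivAt_sdsLapse M Λ hr) hf hP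

theorem zerilliZ_eq_eval (M Λ μ : ℝ) :
    zerilliZ M Λ μ = fun r => (zerilliZNum M Λ μ).eval r / (zerilliZDen M μ).eval r := by
  ext r
  simp [zerilliZ, zerilliZNum, zerilliZDen]

theorem hasDerivAt_zerilliZ (hr : r ≠ 0) (hP : μ * r + 6 * M ≠ 0) :
    HasDerivAt (zerilliZ M Λ μ)
      (((zerilliZNum M Λ μ).derivative.eval r * (zerilliZDen M μ).eval r
        - (zerilliZNum M Λ μ).eval r * (zerilliZDen M μ).derivative.eval r)
        / (zerilliZDen M μ).eval r ^ 2) r := by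
  rw [zerilliZ_eq_eval]
  refine (Polynomial.hasDerivAt _ r).div (Polynomial.hasDerivAt _ r) ?_
  simpa [zerilliZDen] using mul_ne_zero (pow_ne_zero 2 hr) hP

theorem zerilliReducedCoeff_mul (hr : r ≠ 0) (hP : μ * r + 6 * M ≠ 0) :
    zerilliReducedCoeff M Λ μ ℓ r * (3 * r ^ 4 * (μ * r + 6 * M) ^ 2)
      = (zerilliReducedNum M Λ μ ℓ).eval r := by
  rw [zerilliReducedCoeff, (hasDerivAt_zerilliZ (Λ := Λ) hr hP).deriv]
  simp only [zerilliReducedNum, zerilliZNum, zerilliZDen, zerilliZ, sdsLapse, zerilliV,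
    eval_add, eval_sub, eval_mul, eval_pow, eval_C, eval_X, eval_ofNat, eval_zero, eval_one,
    derivative_add, derivative_sub, derivative_mul, derivative_C, derivative_X, derivative_X_pow]
  have hP' : r * μ + M * 6 ≠ 0 := by convert hP using 1; ring
  field_simp
  ring

theorem zerilliReducedNum_eval_zero : (zerilliReducedNum M Λ μ ℓ).eval 0 = 972 * M ^ 4 := by
  simp only [zerilliReducedNum, zerilliZNum, eval_add, eval_sub, eval_mul, eval_pow, eval_C, eval_X,
    eval_ofNat, eval_zero, eval_one, derivative_add, derivative_sub, derivative_mul, derivative_C,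
    derivative_X, derivative_X_pow]
  ring

theorem zerilliReducedCoeff_exists_ne (hM : M ≠ 0) {s : Set ℝ} (hs : s.Infinite)
    (hs0 : ∀ r ∈ s, r ≠ 0) (hsP : ∀ r ∈ s, μ * r + 6 * M ≠ 0) (κ : ℝ) :
    ∃ r ∈ s, zerilliReducedCoeff M Λ μ ℓ r ≠ κ := by
  by_contra! hκ
  set p := zerilliReducedNum M Λ μ ℓ - C κ * (C 3 * X ^ 4 * (C μ * X + C (6 * M)) ^ 2)
  have hroots : s ⊆ {r | p.IsRoot r} := fun r hr => by
    simp [p, ← zerilliReducedCoeff_mul (hs0 r hr) (hsP r hr), hκ r hr]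
  have hp : p = 0 := eq_zero_of_infinite_isRoot p (hs.mono hroots)
  exact hM (by simpa [p, zerilliReducedNum_eval_zero] using congrArg (eval 0) hp)

end Zerilli

theorem stmt_17_general (M Λ : ℝ) (hM : 0 < M) (ℓ : ℕ) (a b : ℝ)
    (hab : a < b) (hI : Set.Ioo a b ⊆ Set.Ioi (0 : ℝ)) :
    let μ : ℝ := ((ℓ : ℝ) - 1) * ((ℓ : ℝ) + 2)
    let f : ℝ → ℝ := fun r => 1 - 2 * M / r - Λ * r ^ 2 / 3
    let Z : ℝ → ℝ := fun r =>
      (2 * M * Λ * r ^ 3 + μ * r * (r - 3 * M) - 6 * M ^ 2)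
        / (r ^ 2 * (μ * r + 6 * M))
    let VZ : ℝ → ℝ := fun r =>
      ((μ ^ 2 * (ℓ : ℝ) * ((ℓ : ℝ) + 1) - 24 * M ^ 2 * Λ) * r ^ 3
          + 6 * μ ^ 2 * M * r ^ 2 + 36 * μ * M ^ 2 * r + 72 * M ^ 3)
        / (r ^ 3 * (μ * r + 6 * M) ^ 2)
    (∀ r ∈ Set.Ioo a b, 0 < f r) →
    (∀ r ∈ Set.Ioo a b, 0 < μ * r + 6 * M) →
    ∀ χ : ℝ → ℝ → ℝ,
      ContDiffOn ℝ 2 (fun p : ℝ × ℝ => χ p.1 p.2) (Set.univ ×ˢ Set.Ioo a b) →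
      (∀ t : ℝ, ∀ r ∈ Set.Ioo a b, waveOp f VZ χ t r = 0) →
      (∀ t : ℝ, ∀ r ∈ Set.Ioo a b,
        f r * deriv (fun s => χ t s) r + Z r * χ t r = 0) →
      ∀ t : ℝ, ∀ r ∈ Set.Ioo a b, χ t r = 0 := by
  intro μ f Z VZ hf hP χ hχ hwave hfirst t₀ r₀ hr₀
  have hr : ∀ r ∈ Ioo a b, r ≠ 0 := fun r h => (hI h).ne'
  have hdiff := hχ.differentiableAt_snd_of_univ_prod two_ne_zero isOpen_Ioo
  set w := fun r => (μ * r + 6 * M) / √(f r)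
  have hw : ∀ r ∈ Ioo a b, 0 < w r := fun r h => div_pos (hP r h) (Real.sqrt_pos.2 (hf r h))
  have hsep : ∀ t, ∀ r ∈ Ioo a b, χ t r * w r = χ t r₀ * w r₀ := fun t r h =>
    isOpen_Ioo.mul_eq_of_linear_ode isPreconnected_Ioo (fun r h => hdiff t h)
      (fun r h => hasDerivAt_zerilliIntegratingFactor (hr r h) (hP r h).ne' (hf r h))
      (fun r h => (hf r h).ne') (hfirst t) h hr₀
  set c := zerilliReducedCoeff M Λ μ ℓ
  have hred : ∀ t, ∀ r ∈ Ioo a b, deriv (deriv fun t' => χ t' r) t = c r * χ t r := by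
    intro t r h
    have hZ := (hasDerivAt_zerilliZ (Λ := Λ) (hr r h) (hP r h).ne').differentiableAt
    have := hwave t r h
    rwa [waveOp_eq_of_first_order hZ (hdiff t h)
      (eventually_of_mem (isOpen_Ioo.mem_nhds h) (hfirst t)), sub_eq_zero] at this
  obtain ⟨r₁, hr₁, hne⟩ := zerilliReducedCoeff_exists_ne (Λ := Λ) (ℓ := ℓ) hM.ne'
    (Ioo_infinite hab) hr (fun r h => (hP r h).ne') (c r₀)
  have key := deriv_deriv_mul_eq_of_mul_eq (hw r₁ hr₁).ne' (fun t => hsep t r₁ hr₁) t₀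
  rw [hred t₀ r₁ hr₁, hred t₀ r₀ hr₀, mul_assoc, mul_assoc, hsep t₀ r₁ hr₁] at key
  have hF : χ t₀ r₀ * w r₀ = 0 :=
    (mul_eq_zero.1 (by linear_combination key : (c r₁ - c r₀) * (χ t₀ r₀ * w r₀) = 0)).resolve_left
      (sub_ne_zero.2 hne)
  exact (mul_eq_zero.1 hF).resolve_right (hw r₀ hr₀).ne'

/-- Core of the injectivity theorem for the even-sector map `[h⁺] ↦ G₊`: a C²
solution of the Zerilli equation annihilated by the first-order operator
`f∂_r + Z` on a nondegenerate interval vanishes identically. -/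
theorem stmt_17 (M Λ : ℝ) (hM : 0 < M) (ℓ : ℕ) (hℓ : 2 ≤ ℓ) (a b : ℝ)
    (hab : a < b) (hI : Set.Ioo a b ⊆ Set.Ioi (0 : ℝ)) :
    let μ : ℝ := ((ℓ : ℝ) - 1) * ((ℓ : ℝ) + 2)
    let f : ℝ → ℝ := fun r => 1 - 2 * M / r - Λ * r ^ 2 / 3
    let Z : ℝ → ℝ := fun r =>
      (2 * M * Λ * r ^ 3 + μ * r * (r - 3 * M) - 6 * M ^ 2)
        / (r ^ 2 * (μ * r + 6 * M))
    let VZ : ℝ → ℝ := fun r =>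
      ((μ ^ 2 * (ℓ : ℝ) * ((ℓ : ℝ) + 1) - 24 * M ^ 2 * Λ) * r ^ 3
          + 6 * μ ^ 2 * M * r ^ 2 + 36 * μ * M ^ 2 * r + 72 * M ^ 3)
        / (r ^ 3 * (μ * r + 6 * M) ^ 2)
    (∀ r ∈ Set.Ioo a b, 0 < f r) →
    (∀ r ∈ Set.Ioo a b, 0 < μ * r + 6 * M) →
    ∀ χ : ℝ → ℝ → ℝ,
      ContDiffOn ℝ 2 (fun p : ℝ × ℝ => χ p.1 p.2) (Set.univ ×ˢ Set.Ioo a b) →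
      (∀ t : ℝ, ∀ r ∈ Set.Ioo a b, waveOp f VZ χ t r = 0) →
      (∀ t : ℝ, ∀ r ∈ Set.Ioo a b,
        f r * deriv (fun s => χ t s) r + Z r * χ t r = 0) →
      ∀ t : ℝ, ∀ r ∈ Set.Ioo a b, χ t r = 0 :=
  stmt_17_general M Λ hM ℓ a b hab hI
end
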